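/- arXiv:2506.15224 — 12 statements merged into one kernel-verified Lean document; each statement's English description precedes it below -/
import Mathlib

section
/- Let k ≥ 1 be a natural number, s > 0, and 0 < β ≤ 1. Let X_1, ..., X_k be independent random variables, each distributed as Lap(s). Then for every real t with t ≥ 2·s·√k·ln(2k/β), Pr[|X_1 + ... + X_k| ≤ t] ≥ 1 - β. -/
open MeasureTheory ProbabilityTheory

/-- `Lap(s)`: the Laplace distribution on `ℝ` with scale `s`, given by the density
`x ↦ (1/(2s)) · exp (-|x|/s)` with respect to Lebesgue measure. -/
noncomputable def lapMeasure (s : ℝ) : Measure ℝ :=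
  volume.withDensity (fun x => ENNReal.ofReal ((1 / (2 * s)) * Real.exp (-|x| / s)))

open Real Set
open scoped NNReal ENNReal

namespace LapAux

lemma expIoi {b : ℝ} (hb : 0 < b) (a : ℝ) :
    IntegrableOn (fun x => rexp (-(b * x))) (Ioi a) := by
  simpa [neg_mul] using exp_neg_integrableOn_Ioi a hb

lemma intIoi {b : ℝ} (hb : 0 < b) (a : ℝ) :
    ∫ x in Ioi a, rexp (-(b * x)) = rexp (-(b * a)) / b := by
  have h := integral_comp_mul_left_Ioi (fun y => rexp (-y)) a hb
  simp only [smul_eq_mul] at h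
  rw [h, integral_exp_neg_Ioi]
  rw [div_eq_inv_mul]

lemma expIic {b : ℝ} (hb : 0 < b) (a : ℝ) :
    IntegrableOn (fun x => rexp (b * x)) (Iic a) := by
  have h1 : IntegrableOn (fun x => rexp (-(b * x))) (Ici (-a)) := by
    rw [integrableOn_Ici_iff_integrableOn_Ioi]; exact expIoi hb _
  have h2 := (integrable_indicator_iff measurableSet_Ici).2 h1
  have h3 := h2.comp_neg
  have h4 : (fun x => (Ici (-a)).indicator (fun x => rexp (-(b * x))) (-x))
      = (Iic a).indicator (fun x => rexp (b * x)) := by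
    ext x
    by_cases hx : x ≤ a
    · rw [indicator_of_mem (by simpa using hx : -x ∈ Ici (-a)), indicator_of_mem (mem_Iic.2 hx)]
      rw [mul_neg, neg_neg]
    · rw [indicator_of_notMem (by simpa using hx : -x ∉ Ici (-a)), indicator_of_notMem (by simpa using hx)]
  rw [← integrable_indicator_iff measurableSet_Iic, ← h4]
  exact h3

lemma intIic {b : ℝ} (hb : 0 < b) (a : ℝ) :
    ∫ x in Iic a, rexp (b * x) = rexp (b * a) / b := by
  have h := integral_comp_neg_Iic a (fun y => rexp (-(b * y)))
  simp only [mul_neg, neg_neg] at h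
  rw [h, intIoi hb, mul_neg, neg_neg]


variable {s : ℝ}

lemma meas_dens (s : ℝ) :
    Measurable (fun x => ENNReal.ofReal ((1 / (2 * s)) * Real.exp (-|x| / s))) := by
  apply ENNReal.measurable_ofReal.comp
  exact (measurable_const.mul (((measurable_abs).neg.div_const s).exp))

lemma dens_nonneg (hs : 0 < s) (x : ℝ) : 0 ≤ (1 / (2 * s)) * Real.exp (-|x| / s) :=
  mul_nonneg (by positivity) (exp_pos _).le

/-- integrability of `exp (c x) * density` on `Ioi 0` -/
lemma int_on_Ioi (hs : 0 < s) {c : ℝ} (hc : |c| * s < 1) :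
    IntegrableOn (fun x => rexp (c * x) * ((1 / (2 * s)) * rexp (-|x| / s))) (Ioi 0) ∧
    ∫ x in Ioi 0, rexp (c * x) * ((1 / (2 * s)) * rexp (-|x| / s)) = 1 / (2 * (1 - c * s)) := by
  have hb : 0 < 1 / s - c := by
    have : c < 1 / s := by
      have h1 : c ≤ |c| := le_abs_self c
      have : |c| < 1 / s := by rw [lt_div_iff₀ hs] at *; linarith [hc]
      linarith
    linarith
  have hcongr : ∀ x ∈ Ioi (0:ℝ),
      rexp (c * x) * ((1 / (2 * s)) * rexp (-|x| / s)) = (1 / (2 * s)) * rexp (-((1 / s - c) * x)) := by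
    intro x hx
    rw [mem_Ioi] at hx
    rw [abs_of_pos hx, show rexp (c * x) * (1 / (2 * s) * rexp (-x / s))
      = 1 / (2 * s) * (rexp (c * x) * rexp (-x / s)) from by ring, ← exp_add]
    congr 1; ring
  constructor
  · apply (IntegrableOn.congr_fun _ (fun x hx => (hcongr x hx).symm) measurableSet_Ioi)
    exact (expIoi hb 0).const_mul _
  · rw [setIntegral_congr_fun measurableSet_Ioi hcongr, integral_const_mul, intIoi hb, mul_zero,
      neg_zero, exp_zero, one_div_mul_one_div, show 2 * s * (1 / s - c) = 2 * (1 - c * s) from by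
        field_simp]

lemma int_on_Iic (hs : 0 < s) {c : ℝ} (hc : |c| * s < 1) :
    IntegrableOn (fun x => rexp (c * x) * ((1 / (2 * s)) * rexp (-|x| / s))) (Iic 0) ∧
    ∫ x in Iic 0, rexp (c * x) * ((1 / (2 * s)) * rexp (-|x| / s)) = 1 / (2 * (1 + c * s)) := by
  have hb : 0 < 1 / s + c := by
    have : -c < 1 / s := by
      have h1 : -c ≤ |c| := neg_le_abs c
      have : |c| < 1 / s := by rw [lt_div_iff₀ hs] at *; linarith [hc]
      linarith
    linarith
  have hcongr : ∀ x ∈ Iic (0:ℝ),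
      rexp (c * x) * ((1 / (2 * s)) * rexp (-|x| / s)) = (1 / (2 * s)) * rexp ((1 / s + c) * x) := by
    intro x hx
    rw [mem_Iic] at hx
    rw [abs_of_nonpos hx, show rexp (c * x) * (1 / (2 * s) * rexp (- -x / s))
      = 1 / (2 * s) * (rexp (c * x) * rexp (- -x / s)) from by ring, ← exp_add]
    congr 1; ring
  constructor
  · apply (IntegrableOn.congr_fun _ (fun x hx => (hcongr x hx).symm) measurableSet_Iic)
    exact (expIic hb 0).const_mul _
  · rw [setIntegral_congr_fun measurableSet_Iic hcongr, integral_const_mul, intIic hb, mul_zero,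
      exp_zero, one_div_mul_one_div, show 2 * s * (1 / s + c) = 2 * (1 + c * s) from by
        field_simp]

lemma int_total (hs : 0 < s) {c : ℝ} (hc : |c| * s < 1) :
    Integrable (fun x => rexp (c * x) * ((1 / (2 * s)) * rexp (-|x| / s))) ∧
    ∫ x, rexp (c * x) * ((1 / (2 * s)) * rexp (-|x| / s)) = (1 - c ^ 2 * s ^ 2)⁻¹ := by
  obtain ⟨hi1, he1⟩ := int_on_Iic hs hc
  obtain ⟨hi2, he2⟩ := int_on_Ioi hs hc
  have hint : Integrable (fun x => rexp (c * x) * ((1 / (2 * s)) * rexp (-|x| / s))) := by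
    have h := hi1.union hi2
    rwa [Iic_union_Ioi, integrableOn_univ] at h
  refine ⟨hint, ?_⟩
  rw [← intervalIntegral.integral_Iic_add_Ioi hi1 hi2, he1, he2]
  have habs : |c * s| < 1 := by rw [abs_mul, abs_of_pos hs]; exact hc
  obtain ⟨hl, hr⟩ := abs_lt.1 habs
  have h1 : 1 - c * s ≠ 0 := by intro h; linarith
  have h2 : 1 + c * s ≠ 0 := by intro h; linarith
  have h3 : 1 - c ^ 2 * s ^ 2 ≠ 0 := by
    intro h; nlinarith [sq_nonneg (c * s)]
  field_simp
  ring


lemma integrable_exp_lap (hs : 0 < s) {c : ℝ} (hc : |c| * s < 1) :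
    Integrable (fun x => rexp (c * x)) (lapMeasure s) := by
  rw [lapMeasure, integrable_withDensity_iff (meas_dens s)
    (ae_of_all _ fun x => ENNReal.ofReal_lt_top)]
  refine ((int_total hs hc).1).congr ?_
  filter_upwards with x
  rw [ENNReal.toReal_ofReal (dens_nonneg hs x)]

lemma integral_exp_lap (hs : 0 < s) {c : ℝ} (hc : |c| * s < 1) :
    ∫ x, rexp (c * x) ∂(lapMeasure s) = (1 - c ^ 2 * s ^ 2)⁻¹ := by
  have hrepr : lapMeasure s = volume.withDensity
      (fun x => ((((1 / (2 * s)) * Real.exp (-|x| / s)).toNNReal : ℝ≥0) : ℝ≥0∞)) := rfl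
  have hmeas : Measurable fun x => ((1 / (2 * s)) * Real.exp (-|x| / s)).toNNReal := by
    apply measurable_real_toNNReal.comp
    exact measurable_const.mul (((measurable_abs).neg.div_const s).exp)
  rw [hrepr, integral_withDensity_eq_integral_smul hmeas]
  rw [← (int_total hs hc).2]
  congr 1
  ext x
  rw [NNReal.smul_def, smul_eq_mul, Real.coe_toNNReal _ (dens_nonneg hs x)]
  ring

lemma lap_Ici (hs : 0 < s) {r : ℝ} (hr : 0 ≤ r) :
    lapMeasure s (Ici r) = ENNReal.ofReal (rexp (-(r / s)) / 2) := by
  rw [lapMeasure, withDensity_apply _ measurableSet_Ici]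
  have hcongr : ∀ x ∈ Ici r,
      (1 / (2 * s)) * Real.exp (-|x| / s) = (1 / (2 * s)) * rexp (-((1 / s) * x)) := by
    intro x hx
    rw [mem_Ici] at hx
    rw [abs_of_nonneg (hr.trans hx)]
    congr 1
    field_simp
  have hint : IntegrableOn (fun x => (1 / (2 * s)) * Real.exp (-|x| / s)) (Ici r) := by
    apply (IntegrableOn.congr_fun _ (fun x hx => (hcongr x hx).symm) measurableSet_Ici)
    rw [integrableOn_Ici_iff_integrableOn_Ioi]
    exact (expIoi (by positivity : (0:ℝ) < 1 / s) r).const_mul _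
  rw [← ofReal_integral_eq_lintegral_ofReal hint
    (ae_of_all _ fun x => dens_nonneg hs x)]
  congr 1
  rw [setIntegral_congr_fun measurableSet_Ici hcongr, integral_const_mul,
    integral_Ici_eq_integral_Ioi, intIoi (by positivity : (0:ℝ) < 1 / s),
    show (1:ℝ) / s * r = r / s from by ring]
  generalize rexp (-(r / s)) = E
  field_simp

lemma lap_Iic_neg (hs : 0 < s) {r : ℝ} (hr : 0 ≤ r) :
    lapMeasure s (Iic (-r)) = ENNReal.ofReal (rexp (-(r / s)) / 2) := by
  rw [lapMeasure, withDensity_apply _ measurableSet_Iic]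
  have hcongr : ∀ x ∈ Iic (-r),
      (1 / (2 * s)) * Real.exp (-|x| / s) = (1 / (2 * s)) * rexp ((1 / s) * x) := by
    intro x hx
    rw [mem_Iic] at hx
    rw [abs_of_nonpos (hx.trans (by linarith))]
    congr 1
    field_simp
  have hint : IntegrableOn (fun x => (1 / (2 * s)) * Real.exp (-|x| / s)) (Iic (-r)) := by
    apply (IntegrableOn.congr_fun _ (fun x hx => (hcongr x hx).symm) measurableSet_Iic)
    exact (expIic (by positivity : (0:ℝ) < 1 / s) (-r)).const_mul _
  rw [← ofReal_integral_eq_lintegral_ofReal hint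
    (ae_of_all _ fun x => dens_nonneg hs x)]
  congr 1
  rw [setIntegral_congr_fun measurableSet_Iic hcongr, integral_const_mul,
    intIic (by positivity : (0:ℝ) < 1 / s),
    show (1:ℝ) / s * -r = -(r / s) from by ring]
  generalize rexp (-(r / s)) = E
  field_simp


lemma mgf_lap {s : ℝ} (hs : 0 < s) {c : ℝ} (hc : |c| * s < 1)
    {Ω : Type*} [MeasurableSpace Ω] {P : Measure Ω} {Y : Ω → ℝ}
    (hY : Measurable Y) (hd : Measure.map Y P = lapMeasure s) :
    mgf Y P c = (1 - c ^ 2 * s ^ 2)⁻¹ ∧ Integrable (fun ω => rexp (c * Y ω)) P := by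
  have hg : AEStronglyMeasurable (fun x => rexp (c * x)) (Measure.map Y P) :=
    (Real.continuous_exp.comp (continuous_const.mul continuous_id)).aestronglyMeasurable
  have hint' : Integrable (fun x => rexp (c * x)) (Measure.map Y P) := by
    rw [hd]; exact integrable_exp_lap hs hc
  constructor
  · calc mgf Y P c = ∫ ω, rexp (c * Y ω) ∂P := rfl
      _ = ∫ x, rexp (c * x) ∂(Measure.map Y P) :=
        (integral_map hY.aemeasurable hg).symm
      _ = (1 - c ^ 2 * s ^ 2)⁻¹ := by rw [hd]; exact integral_exp_lap hs hc
  · exact (integrable_map_measure hg hY.aemeasurable).1 hint'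

set_option maxHeartbeats 1000000 in
lemma arith {k : ℕ} (hk2 : 2 ≤ k) {s β t L r u : ℝ} (hs : 0 < s) (hβ : 0 < β) (hβ1 : β ≤ 1)
    (hrr : r * r = (k : ℝ)) (hr1 : 1 ≤ r)
    (hLeq : L = Real.log 2 + Real.log k - Real.log β)
    (hu : u = min (L / (2 * r)) (1 / 2))
    (ht : 2 * s * r * L ≤ t) :
    rexp (-(u / s) * t) * ((1 - u ^ 2)⁻¹) ^ k ≤ β / 2 := by
  have hk0 : (0:ℝ) < k := by positivity
  have hk2' : (2:ℝ) ≤ (k:ℝ) := by exact_mod_cast hk2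
  have hr0 : 0 < r := by linarith
  have hlog2 : (0.6931471803 : ℝ) < Real.log 2 := Real.log_two_gt_d9
  have hlogβ : Real.log β ≤ 0 := Real.log_nonpos hβ.le hβ1
  have hlogk : Real.log 2 ≤ Real.log k := Real.log_le_log (by norm_num) hk2'
  obtain ⟨a, hadef⟩ : ∃ a : ℝ, a = Real.log 2 - Real.log β := ⟨_, rfl⟩
  have ha : Real.log 2 ≤ a := by rw [hadef]; linarith
  have ha0 : 0 < a := by linarith
  have hLa : L = Real.log k + a := by rw [hLeq, hadef]; ring
  have hL0 : 0 < L := by rw [hLa]; linarith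
  have hu0 : 0 < u := by rw [hu]; exact lt_min (by positivity) (by norm_num)
  have hu2 : u ≤ 1 / 2 := by rw [hu]; exact min_le_right _ _
  have husq : u ^ 2 ≤ 1 / 4 := by nlinarith
  have h34 : (3:ℝ) / 4 ≤ 1 - u ^ 2 := by linarith
  have h1u : (0:ℝ) < 1 - u ^ 2 := by linarith
  -- the key exponent inequality
  have hkeyexp : (k : ℝ) * (u ^ 2 / (1 - u ^ 2)) - 2 * r * L * u ≤ Real.log β - Real.log 2 := by
    have hwb : u ^ 2 / (1 - u ^ 2) ≤ (4 / 3) * u ^ 2 := by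
      rw [div_le_iff₀ h1u]
      nlinarith
    rcases min_cases (L / (2 * r)) (1 / 2 : ℝ) with ⟨hmin, hcond⟩ | ⟨hmin, hcond⟩ <;>
      rw [hmin] at hu
    · -- u = L / (2r), L ≤ r
      have hLr : L ≤ r := by
        rw [div_le_div_iff₀ (by positivity) (by norm_num)] at hcond
        linarith
      have husq' : u ^ 2 = L ^ 2 / (4 * (r * r)) := by
        rw [hu, div_pow, show (2 * r) ^ 2 = 4 * (r * r) from by ring]
      have h1 : (k : ℝ) * (u ^ 2 / (1 - u ^ 2)) ≤ L ^ 2 / 3 := by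
        calc (k : ℝ) * (u ^ 2 / (1 - u ^ 2)) ≤ (k : ℝ) * ((4 / 3) * u ^ 2) :=
            mul_le_mul_of_nonneg_left hwb hk0.le
          _ = L ^ 2 / 3 := by
              rw [husq', ← hrr]
              field_simp
      have h2 : 2 * r * L * u = L ^ 2 := by
        rw [hu]
        field_simp
      have hL1 : Real.log 2 + a ≤ L := by rw [hLa]; linarith
      have hsq : (Real.log 2 + a) ^ 2 ≤ L ^ 2 := by nlinarith
      have h4la : 4 * (Real.log 2 * a) ≤ (Real.log 2 + a) ^ 2 := by
        nlinarith [sq_nonneg (Real.log 2 - a)]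
      have hla : 0.6931471803 * a ≤ Real.log 2 * a :=
        mul_le_mul_of_nonneg_right hlog2.le ha0.le
      have h3 : a ≤ (2 / 3) * L ^ 2 := by nlinarith
      rw [h2]
      have hba : Real.log β - Real.log 2 = -a := by rw [hadef]; ring
      rw [hba]
      linarith
    · -- u = 1/2, r ≤ L
      have hrL : r ≤ L := by
        rw [lt_div_iff₀ (by positivity : (0:ℝ) < 2 * r)] at hcond
        linarith
      have hw : u ^ 2 / (1 - u ^ 2) = 1 / 3 := by rw [hu]; norm_num
      have h2 : 2 * r * L * u = r * L := by rw [hu]; ring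
      rw [hw, h2]
      have hgoal : (k : ℝ) / 3 + a ≤ r * L := by
        by_cases hcase : a ≤ (2 / 3) * (k : ℝ)
        · have : (k : ℝ) ≤ r * L := by nlinarith
          linarith
        · push_neg at hcase
          have hrL2 : r * L = r * Real.log k + r * a := by rw [hLa]; ring
          have hr34 : 0 ≤ Real.log k + (2 / 3) * r ^ 2 - r := by
            nlinarith [sq_nonneg (r - 3 / 4)]
          have hprod : 0 ≤ (r - 1) * (a - (2 / 3) * (k : ℝ)) :=
            mul_nonneg (by linarith) (by linarith)
          have hr3 : r * (r * r) = r * (k : ℝ) := by rw [hrr]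
          linarith [mul_nonneg hr0.le hr34, hprod, hrr, hrL2, hr3]
      have hba : Real.log β - Real.log 2 = -a := by rw [hadef]; ring
      rw [hba]
      linarith
  -- base bound on the inverse
  have hbase : (1 - u ^ 2)⁻¹ ≤ rexp (u ^ 2 / (1 - u ^ 2)) := by
    have hkey : 1 ≤ (1 - u ^ 2) * rexp (u ^ 2 / (1 - u ^ 2)) := by
      calc (1:ℝ) = (1 - u ^ 2) * (u ^ 2 / (1 - u ^ 2) + 1) := by field_simp; ring
        _ ≤ (1 - u ^ 2) * rexp (u ^ 2 / (1 - u ^ 2)) := by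
            apply mul_le_mul_of_nonneg_left _ h1u.le
            exact Real.add_one_le_exp _
    rw [inv_eq_one_div, div_le_iff₀ h1u]
    linarith [hkey, mul_comm (1 - u ^ 2) (rexp (u ^ 2 / (1 - u ^ 2)))]
  have hpow : ((1 - u ^ 2)⁻¹) ^ k ≤ rexp ((k : ℝ) * (u ^ 2 / (1 - u ^ 2))) := by
    calc ((1 - u ^ 2)⁻¹) ^ k ≤ (rexp (u ^ 2 / (1 - u ^ 2))) ^ k :=
        pow_le_pow_left₀ (by positivity) hbase k
      _ = rexp ((k : ℝ) * (u ^ 2 / (1 - u ^ 2))) := by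
          rw [← Real.exp_nat_mul]
  have hexp1 : rexp (-(u / s) * t) ≤ rexp (-(2 * r * L * u)) := by
    apply Real.exp_le_exp.2
    have h1 : (u / s) * (2 * s * r * L) = 2 * r * L * u := by
      field_simp
    have h2 : (u / s) * (2 * s * r * L) ≤ (u / s) * t :=
      mul_le_mul_of_nonneg_left ht (by positivity)
    nlinarith [h2]
  calc rexp (-(u / s) * t) * ((1 - u ^ 2)⁻¹) ^ k
      ≤ rexp (-(2 * r * L * u)) * rexp ((k : ℝ) * (u ^ 2 / (1 - u ^ 2))) := by
        apply mul_le_mul hexp1 hpow (by positivity) (by positivity)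
    _ = rexp ((k : ℝ) * (u ^ 2 / (1 - u ^ 2)) - 2 * r * L * u) := by
        rw [← Real.exp_add]; ring_nf
    _ ≤ rexp (Real.log β - Real.log 2) := Real.exp_le_exp.2 hkeyexp
    _ = β / 2 := by
        rw [← Real.log_div (ne_of_gt hβ) (by norm_num), Real.exp_log (by positivity)]


end LapAux

open LapAux

/-- Concentration for sums of independent Laplace random variables (Xian et al.):
if `X_1, …, X_k ~ Lap(s)` are independent and `t ≥ 2 s √k ln(2k/β)`, then
`Pr[|X_1 + ⋯ + X_k| ≤ t] ≥ 1 - β`. -/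
theorem sum_laplace_concentration (k : ℕ) (hk : 1 ≤ k) (s : ℝ) (hs : 0 < s)
    (β : ℝ) (hβ : 0 < β) (hβ1 : β ≤ 1)
    {Ω : Type*} [MeasurableSpace Ω] (P : Measure Ω) [IsProbabilityMeasure P]
    (X : Fin k → Ω → ℝ) (hmeas : ∀ i, Measurable (X i))
    (hindep : iIndepFun X P)
    (hdist : ∀ i, Measure.map (X i) P = lapMeasure s)
    (t : ℝ) (ht : 2 * s * Real.sqrt k * Real.log (2 * k / β) ≤ t) :
    ENNReal.ofReal (1 - β) ≤ P {ω | |∑ i, X i ω| ≤ t} := by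
  classical
  have hk0 : (0:ℝ) < k := by exact_mod_cast hk
  have hlog2 : (0:ℝ) < Real.log 2 := Real.log_pos (by norm_num)
  have hlogβ : Real.log β ≤ 0 := Real.log_nonpos hβ.le hβ1
  have hk1' : (1:ℝ) ≤ k := by exact_mod_cast hk
  have hfrac : (2:ℝ) ≤ 2 * k / β := by
    rw [le_div_iff₀ hβ]; nlinarith
  have hL2 : Real.log 2 ≤ Real.log (2 * k / β) := Real.log_le_log (by norm_num) hfrac
  have hL0 : 0 < Real.log (2 * k / β) := lt_of_lt_of_le hlog2 hL2
  have hsqrt1 : 1 ≤ Real.sqrt k := by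
    rw [show (1:ℝ) = Real.sqrt 1 from (Real.sqrt_one).symm]
    exact Real.sqrt_le_sqrt hk1'
  have ht0 : 0 ≤ t := by
    refine le_trans ?_ ht
    have h1 : (0:ℝ) ≤ 2 * s * Real.sqrt k := by positivity
    exact mul_nonneg h1 hL0.le
  have hS : Measurable (fun ω => ∑ i, X i ω) :=
    Finset.measurable_sum _ (fun i _ => hmeas i)
  have hLeq : Real.log (2 * k / β) = Real.log 2 + Real.log k - Real.log β := by
    rw [Real.log_div (by positivity) (ne_of_gt hβ),
      Real.log_mul (by norm_num) (ne_of_gt hk0)]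
  -- tail bounds
  have hup : P {ω | t ≤ ∑ i, X i ω} ≤ ENNReal.ofReal (β / 2) ∧
      P {ω | ∑ i, X i ω ≤ -t} ≤ ENNReal.ofReal (β / 2) := by
    rcases eq_or_lt_of_le hk with hk1 | hk2
    · -- k = 1, exact tail computation
      obtain rfl : k = 1 := hk1.symm
      have hset1 : {ω | t ≤ ∑ i, X i ω} = X 0 ⁻¹' (Ici t) := by
        ext ω; simp [Fin.sum_univ_one]
      have hset2 : {ω | ∑ i, X i ω ≤ -t} = X 0 ⁻¹' (Iic (-t)) := by
        ext ω; simp [Fin.sum_univ_one]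
      have hexp : rexp (-(t / s)) ≤ β := by
        have hts : 2 * (Real.log 2 - Real.log β) ≤ t / s := by
          rw [le_div_iff₀ hs]
          have h := ht
          simp only [Nat.cast_one, Real.sqrt_one, mul_one] at h
          rw [Real.log_div (by norm_num) (ne_of_gt hβ)] at h
          nlinarith [h]
        calc rexp (-(t / s)) ≤ rexp (Real.log β) := by
              apply Real.exp_le_exp.2; nlinarith
          _ = β := Real.exp_log hβ
      constructor
      · rw [hset1, ← Measure.map_apply (hmeas 0) measurableSet_Ici, hdist 0,
          lap_Ici hs ht0]
        apply ENNReal.ofReal_le_ofReal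
        linarith
      · rw [hset2, ← Measure.map_apply (hmeas 0) measurableSet_Iic, hdist 0,
          lap_Iic_neg hs ht0]
        apply ENNReal.ofReal_le_ofReal
        linarith
    · -- k ≥ 2 : Chernoff bound
      have hk2' : 2 ≤ k := hk2
      set r : ℝ := Real.sqrt k with hrdef
      set L : ℝ := Real.log (2 * k / β) with hLdef
      set u : ℝ := min (L / (2 * r)) (1 / 2) with hudef
      have hrr : r * r = (k : ℝ) := Real.mul_self_sqrt hk0.le
      have hr0 : 0 < r := by linarith
      have hu0 : 0 < u := lt_min (by positivity) (by norm_num)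
      have hu2 : u ≤ 1 / 2 := min_le_right _ _
      have hu1 : u < 1 := by linarith
      set c : ℝ := u / s with hcdef
      have hc0 : 0 < c := by positivity
      have hcs : |c| * s < 1 := by
        rw [abs_of_pos hc0, hcdef, div_mul_cancel₀ _ (ne_of_gt hs)]
        exact hu1
      have hcs' : |(-c)| * s < 1 := by rwa [abs_neg]
      have hcsq : c ^ 2 * s ^ 2 = u ^ 2 := by
        rw [hcdef, div_pow, div_mul_cancel₀ _ (by positivity : s ^ 2 ≠ 0)]
      have hmgfi : ∀ i, mgf (X i) P c = (1 - u ^ 2)⁻¹ := fun i => by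
        rw [(mgf_lap hs hcs (hmeas i) (hdist i)).1, hcsq]
      have hmgfi' : ∀ i, mgf (X i) P (-c) = (1 - u ^ 2)⁻¹ := fun i => by
        rw [(mgf_lap hs hcs' (hmeas i) (hdist i)).1, neg_sq, hcsq]
      have hinti : ∀ i, Integrable (fun ω => rexp (c * X i ω)) P := fun i =>
        (mgf_lap hs hcs (hmeas i) (hdist i)).2
      have hinti' : ∀ i, Integrable (fun ω => rexp (-c * X i ω)) P := fun i =>
        (mgf_lap hs hcs' (hmeas i) (hdist i)).2
      have hintS : Integrable (fun ω => rexp (c * (∑ i, X i) ω)) P :=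
        hindep.integrable_exp_mul_sum hmeas (fun i _ => hinti i)
      have hintS' : Integrable (fun ω => rexp (-c * (∑ i, X i) ω)) P :=
        hindep.integrable_exp_mul_sum hmeas (fun i _ => hinti' i)
      have hmgfsum : mgf (∑ i, X i) P c = ((1 - u ^ 2)⁻¹) ^ k := by
        rw [hindep.mgf_sum hmeas Finset.univ]
        rw [Finset.prod_congr rfl (fun i _ => hmgfi i), Finset.prod_const,
          Finset.card_univ, Fintype.card_fin]
      have hmgfsum' : mgf (∑ i, X i) P (-c) = ((1 - u ^ 2)⁻¹) ^ k := by
        rw [hindep.mgf_sum hmeas Finset.univ]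
        rw [Finset.prod_congr rfl (fun i _ => hmgfi' i), Finset.prod_const,
          Finset.card_univ, Fintype.card_fin]
      have harith : rexp (-(u / s) * t) * ((1 - u ^ 2)⁻¹) ^ k ≤ β / 2 :=
        arith hk2' hs hβ hβ1 hrr hsqrt1 hLeq hudef ht
      have hSumEq : (∑ i, X i) = fun ω => ∑ i, X i ω := by
        funext ω; exact Finset.sum_apply ω Finset.univ X
      constructor
      · have hch := measure_ge_le_exp_mul_mgf (μ := P) (X := ∑ i, X i) t hc0.le hintS
        rw [hmgfsum, hSumEq] at hch
        have hreal : (P {ω | t ≤ ∑ i, X i ω}).toReal ≤ β / 2 := by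
          refine le_trans hch ?_
          rw [show -c * t = -(u / s) * t from by rw [hcdef]]
          exact harith
        rw [← ENNReal.ofReal_toReal (measure_ne_top P _)]
        exact ENNReal.ofReal_le_ofReal hreal
      · have hch := measure_le_le_exp_mul_mgf (μ := P) (X := ∑ i, X i) (-t)
          (neg_nonpos.2 hc0.le) hintS'
        rw [hmgfsum', hSumEq] at hch
        have hreal : (P {ω | ∑ i, X i ω ≤ -t}).toReal ≤ β / 2 := by
          refine le_trans hch ?_
          rw [show - -c * -t = -(u / s) * t from by rw [hcdef]; ring]
          exact harith
        rw [← ENNReal.ofReal_toReal (measure_ne_top P _)]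
        exact ENNReal.ofReal_le_ofReal hreal
  -- glue
  obtain ⟨h1, h2⟩ := hup
  have hA : MeasurableSet {ω | |∑ i, X i ω| ≤ t} :=
    measurableSet_le hS.abs measurable_const
  have hsub : {ω | |∑ i, X i ω| ≤ t}ᶜ ⊆ {ω | t ≤ ∑ i, X i ω} ∪ {ω | ∑ i, X i ω ≤ -t} := by
    intro ω hω
    simp only [mem_compl_iff, mem_setOf_eq, not_le] at hω
    simp only [mem_union, mem_setOf_eq]
    rcases lt_abs.1 hω with h | h
    · exact Or.inl h.le
    · exact Or.inr (by linarith)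
  have hcompl : P {ω | |∑ i, X i ω| ≤ t}ᶜ ≤ ENNReal.ofReal β := by
    calc P {ω | |∑ i, X i ω| ≤ t}ᶜ
        ≤ P ({ω | t ≤ ∑ i, X i ω} ∪ {ω | ∑ i, X i ω ≤ -t}) := measure_mono hsub
      _ ≤ P {ω | t ≤ ∑ i, X i ω} + P {ω | ∑ i, X i ω ≤ -t} := measure_union_le _ _
      _ ≤ ENNReal.ofReal (β / 2) + ENNReal.ofReal (β / 2) := add_le_add h1 h2
      _ = ENNReal.ofReal β := by
          rw [← ENNReal.ofReal_add (by positivity) (by positivity)]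
          norm_num
  have htot : P {ω | |∑ i, X i ω| ≤ t} + P {ω | |∑ i, X i ω| ≤ t}ᶜ = 1 := by
    rw [measure_add_measure_compl hA, measure_univ]
  have hge : (1:ℝ≥0∞) ≤ P {ω | |∑ i, X i ω| ≤ t} + ENNReal.ofReal β := by
    rw [← htot]
    exact add_le_add_right hcompl _
  calc ENNReal.ofReal (1 - β) = 1 - ENNReal.ofReal β := by
        rw [ENNReal.ofReal_sub _ hβ.le, ENNReal.ofReal_one]
    _ ≤ P {ω | |∑ i, X i ω| ≤ t} := tsub_le_iff_right.2 hge
end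

section
/- Let V be a finite set with |V| = n ≥ 1, let {L_v}_{v∈M} be a partition of V indexed by a set M, let ε > 0 and 0 < α ≤ 1, and let (Y_u)_{u∈V} be independent random variables each distributed as Lap(1/ε). Then the probability that there exists some v ∈ M with |Σ_{u∈L_v} Y_u| > (2/ε)·√(|L_v|)·ln(2n/α) is at most α. (This bounds the total failure probability of the Laplace-with-margin algorithm by α.) -/
open MeasureTheory ProbabilityTheory Finset

open Real Set
open scoped NNReal ENNReal

private lemma quad_aux (u : ℝ) : 0 ≤ (2/3) * u^2 - u + Real.log 2 := by
  nlinarith [Real.log_two_gt_d9, sq_nonneg (u - 3/4)]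

private lemma log_one_sub_ge {y : ℝ} (hy : y < 1) : -(y/(1-y)) ≤ Real.log (1 - y) := by
  have h1 : 0 < 1 - y := by linarith
  have h2 : Real.log (1-y)⁻¹ ≤ (1-y)⁻¹ - 1 := Real.log_le_sub_one_of_pos (by positivity)
  rw [Real.log_inv] at h2
  have h3 : (1-y)⁻¹ - 1 = y/(1-y) := by field_simp; ring
  linarith

private lemma lap_integrableOn_exp_mul_Ioi {c : ℝ} (hc : c < 0) :
    IntegrableOn (fun x => Real.exp (c * x)) (Ioi (0:ℝ)) := by
  have h := exp_neg_integrableOn_Ioi 0 (neg_pos.mpr hc)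
  simpa using h

private lemma lap_integral_exp_mul_Ioi {c : ℝ} (hc : c < 0) :
    ∫ x in Ioi (0:ℝ), Real.exp (c * x) = -1/c := by
  have h : (0:ℝ) < -c := neg_pos.mpr hc
  have h2 := integral_comp_mul_left_Ioi (fun x => Real.exp (-x)) 0 h
  simp only [mul_zero, neg_mul, neg_neg, smul_eq_mul] at h2
  rw [h2, integral_exp_neg_Ioi_zero]
  rw [mul_one, eq_div_iff (by linarith : c ≠ 0)]
  field_simp [hc.ne]

private lemma lap_integrableOn_exp_mul_Iic {c : ℝ} (hc : 0 < c) :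
    IntegrableOn (fun x => Real.exp (c * x)) (Iic (0:ℝ)) := by
  have A : MeasurableEmbedding (fun x : ℝ => -x) :=
    (Homeomorph.neg ℝ).isClosedEmbedding.measurableEmbedding
  have h2 : volume.restrict (Iic (0:ℝ)) =
      Measure.map (fun x : ℝ => -x) (volume.restrict (Ici (0:ℝ))) := by
    rw [← Measure.map_neg_eq_self (volume : Measure ℝ), A.restrict_map]
    congr 1
    simp [neg_preimage, neg_Iic]
  rw [IntegrableOn, h2, A.integrable_map_iff]
  have h1 : IntegrableOn (fun x => Real.exp (-c * x)) (Ioi (0:ℝ)) :=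
    lap_integrableOn_exp_mul_Ioi (by linarith)
  have h3 := (integrableOn_Ici_iff_integrableOn_Ioi).mpr h1
  exact h3.congr_fun (fun x _ => by simp only [Function.comp_apply]; ring_nf) measurableSet_Ici

private lemma lap_integral_exp_mul_Iic {c : ℝ} (hc : 0 < c) :
    ∫ x in Iic (0:ℝ), Real.exp (c * x) = 1/c := by
  have h : ∫ x in Iic (0:ℝ), Real.exp (-c * (-x)) = ∫ x in Ioi (-(0:ℝ)), Real.exp (-c * x) :=
    integral_comp_neg_Iic 0 (fun x => Real.exp (-c * x))
  simp only [neg_zero] at h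
  have h2 : ∀ x : ℝ, Real.exp (-c * (-x)) = Real.exp (c * x) := fun x => by ring_nf
  rw [show (fun x => Real.exp (-c*(-x))) = (fun x => Real.exp (c*x)) from funext h2] at h
  rw [h, lap_integral_exp_mul_Ioi (by linarith)]
  field_simp

private lemma lapF_integral {b t : ℝ} (hb : 0 < b) (ht : |t| < 1/b) :
    Integrable (fun x => 1/(2*b) * Real.exp (-|x|/b) * Real.exp (t*x)) volume ∧
    ∫ x, 1/(2*b) * Real.exp (-|x|/b) * Real.exp (t*x) = 1/(1 - t^2*b^2) := by
  obtain ⟨ht2, ht1⟩ := abs_lt.mp ht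
  have hbne : b ≠ 0 := hb.ne'
  have hc1 : t - 1/b < 0 := by linarith
  have hc2 : 0 < t + 1/b := by linarith
  have hEq1 : ∀ x ∈ Ioi (0:ℝ),
      1/(2*b) * Real.exp ((t - 1/b) * x) = 1/(2*b) * Real.exp (-|x|/b) * Real.exp (t*x) := by
    intro x hx
    rw [abs_of_pos hx, mul_assoc, ← Real.exp_add]
    congr 1
    field_simp
    ring
  have hEq2 : ∀ x ∈ Iic (0:ℝ),
      1/(2*b) * Real.exp ((t + 1/b) * x) = 1/(2*b) * Real.exp (-|x|/b) * Real.exp (t*x) := by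
    intro x hx
    rw [abs_of_nonpos hx, mul_assoc, ← Real.exp_add]
    congr 1
    field_simp
    ring
  have hI1' : IntegrableOn (fun x => 1/(2*b) * Real.exp ((t - 1/b) * x)) (Ioi 0) :=
    (lap_integrableOn_exp_mul_Ioi hc1).const_mul (1/(2*b))
  have hI1 : IntegrableOn (fun x => 1/(2*b) * Real.exp (-|x|/b) * Real.exp (t*x)) (Ioi 0) :=
    hI1'.congr_fun hEq1 measurableSet_Ioi
  have hI2' : IntegrableOn (fun x => 1/(2*b) * Real.exp ((t + 1/b) * x)) (Iic 0) :=
    (lap_integrableOn_exp_mul_Iic hc2).const_mul (1/(2*b))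
  have hI2 : IntegrableOn (fun x => 1/(2*b) * Real.exp (-|x|/b) * Real.exp (t*x)) (Iic 0) :=
    hI2'.congr_fun hEq2 measurableSet_Iic
  have hInt : Integrable (fun x => 1/(2*b) * Real.exp (-|x|/b) * Real.exp (t*x)) volume := by
    rw [← integrableOn_univ, ← Iic_union_Ioi (a := (0:ℝ))]
    exact hI2.union hI1
  refine ⟨hInt, ?_⟩
  rw [← intervalIntegral.integral_Iic_add_Ioi hI2 hI1]
  have hv1 : ∫ x in Ioi (0:ℝ), 1/(2*b) * Real.exp (-|x|/b) * Real.exp (t*x)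
      = 1/(2*b) * (-1/(t - 1/b)) := by
    rw [← setIntegral_congr_fun measurableSet_Ioi hEq1, integral_const_mul,
      lap_integral_exp_mul_Ioi hc1]
  have hv2 : ∫ x in Iic (0:ℝ), 1/(2*b) * Real.exp (-|x|/b) * Real.exp (t*x)
      = 1/(2*b) * (1/(t + 1/b)) := by
    rw [← setIntegral_congr_fun measurableSet_Iic hEq2, integral_const_mul,
      lap_integral_exp_mul_Iic hc2]
  rw [hv1, hv2]
  have h1 : t - 1/b ≠ 0 := hc1.ne
  have h2 : t + 1/b ≠ 0 := hc2.ne'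
  have hp1 : 0 < 1 + t*b := by
    have h := mul_pos hb hc2
    rw [mul_add, mul_one_div, div_self hbne] at h
    linarith
  have hp2 : 0 < 1 - t*b := by
    have h := mul_neg_of_pos_of_neg hb hc1
    rw [mul_sub, mul_one_div, div_self hbne] at h
    linarith
  have e1 : 1/(t+1/b) = b/(1+t*b) := by
    rw [div_eq_div_iff h2 hp1.ne']
    field_simp
    ring
  have e2 : -1/(t-1/b) = b/(1-t*b) := by
    rw [div_eq_div_iff h1 hp2.ne']
    field_simp
    ring
  rw [e1, e2, show 1 - t^2*b^2 = (1+t*b)*(1-t*b) by ring]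
  have hq1 : (1 + t*b) ≠ 0 := hp1.ne'
  have hq2 : (1 - t*b) ≠ 0 := hp2.ne'
  rw [div_mul_div_comm, div_mul_div_comm, div_add_div _ _ (mul_ne_zero (mul_ne_zero two_ne_zero hbne) hq1) (mul_ne_zero (mul_ne_zero two_ne_zero hbne) hq2), div_eq_div_iff (mul_ne_zero (mul_ne_zero (mul_ne_zero two_ne_zero hbne) hq1) (mul_ne_zero (mul_ne_zero two_ne_zero hbne) hq2)) (mul_ne_zero hq1 hq2)]
  ring

private lemma lap_g_meas (b : ℝ) : Measurable (fun x : ℝ => 1/(2*b) * Real.exp (-|x|/b)) :=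
  ((measurable_id.abs.neg.div_const b).exp.const_mul (1/(2*b)))

private lemma lapMeasure_eq (b : ℝ) : lapMeasure b
    = volume.withDensity (fun x => ((1/(2*b) * Real.exp (-|x|/b)).toNNReal : ℝ≥0∞)) := rfl

private lemma lap_exp_integrable {b t : ℝ} (hb : 0 < b) (ht : |t| < 1/b) :
    Integrable (fun x => Real.exp (t*x)) (lapMeasure b) := by
  rw [lapMeasure_eq,
    integrable_withDensity_iff_integrable_smul₀ ((lap_g_meas b).real_toNNReal.aemeasurable)]
  refine ((lapF_integral hb ht).1).congr (Filter.Eventually.of_forall fun x => ?_)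
  have hnn : (0:ℝ) ≤ 1/(2*b) * Real.exp (-|x|/b) := by positivity
  simp only [NNReal.smul_def, Real.coe_toNNReal _ hnn, smul_eq_mul]

private lemma lap_mgf_eq {b t : ℝ} (hb : 0 < b) (ht : |t| < 1/b) :
    ∫ x, Real.exp (t*x) ∂(lapMeasure b) = 1/(1 - t^2*b^2) := by
  rw [lapMeasure_eq,
    integral_withDensity_eq_integral_smul₀ ((lap_g_meas b).real_toNNReal.aemeasurable)]
  rw [← (lapF_integral hb ht).2]
  congr 1
  funext x
  have hnn : (0:ℝ) ≤ 1/(2*b) * Real.exp (-|x|/b) := by positivity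
  simp only [NNReal.smul_def, Real.coe_toNNReal _ hnn, smul_eq_mul]

private lemma lap_tail {b T : ℝ} (hb : 0 < b) (hT : 0 ≤ T) :
    lapMeasure b {x : ℝ | T < |x|} ≤ ENNReal.ofReal (Real.exp (-T/b)) := by
  have hg : Integrable (fun x : ℝ => 1/(2*b) * Real.exp (-|x|/b)) volume := by
    have h0 : |(0:ℝ)| < 1/b := by rw [abs_zero]; positivity
    have h := (lapF_integral hb h0).1
    simpa using h
  have hval : ∫ x in Ioi T, 1/(2*b) * Real.exp (-|x|/b) = 1/2 * Real.exp (-T/b) := by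
    have hEq : ∀ x ∈ Ioi T, 1/(2*b) * Real.exp (-(1/b) * x) = 1/(2*b) * Real.exp (-|x|/b) := by
      intro x hx
      have hx0 : 0 < x := lt_of_le_of_lt hT hx
      rw [abs_of_pos hx0]
      ring_nf
    rw [← setIntegral_congr_fun measurableSet_Ioi hEq, integral_const_mul]
    have h2 := integral_comp_mul_left_Ioi (fun x => Real.exp (-x)) T
      (by positivity : (0:ℝ) < 1/b)
    simp only [← neg_mul, smul_eq_mul] at h2
    rw [h2, integral_exp_neg_Ioi]
    have hbne : b ≠ 0 := hb.ne'
    rw [show -(1/b*T) = -T/b by field_simp]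
    field_simp
  have hvalIic : ∫ x in Iic (-T), 1/(2*b) * Real.exp (-|x|/b) = 1/2 * Real.exp (-T/b) := by
    have h := integral_comp_neg_Iic (-T) (fun x => 1/(2*b) * Real.exp (-|x|/b))
    simp only [abs_neg, neg_neg] at h
    rw [h]
    exact hval
  have hnn : 0 ≤ᵐ[volume.restrict (Iic (-T))] (fun x : ℝ => 1/(2*b) * Real.exp (-|x|/b)) :=
    Filter.Eventually.of_forall fun x => by positivity
  have hnn' : 0 ≤ᵐ[volume.restrict (Ioi T)] (fun x : ℝ => 1/(2*b) * Real.exp (-|x|/b)) :=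
    Filter.Eventually.of_forall fun x => by positivity
  have hsub : {x : ℝ | T < |x|} ⊆ Iic (-T) ∪ Ioi T := by
    intro x hx
    simp only [Set.mem_setOf_eq] at hx
    rcases lt_abs.mp hx with h | h
    · exact Or.inr h
    · exact Or.inl (by simp only [Set.mem_Iic]; linarith)
  calc lapMeasure b {x : ℝ | T < |x|} ≤ lapMeasure b (Iic (-T) ∪ Ioi T) := measure_mono hsub
    _ ≤ lapMeasure b (Iic (-T)) + lapMeasure b (Ioi T) := measure_union_le _ _
    _ = ENNReal.ofReal (1/2 * Real.exp (-T/b)) + ENNReal.ofReal (1/2 * Real.exp (-T/b)) := by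
        rw [lapMeasure, withDensity_apply _ measurableSet_Iic,
          withDensity_apply _ measurableSet_Ioi,
          ← ofReal_integral_eq_lintegral_ofReal hg.integrableOn hnn,
          ← ofReal_integral_eq_lintegral_ofReal hg.integrableOn hnn',
          hval, hvalIic]
    _ = ENNReal.ofReal (Real.exp (-T/b)) := by
        rw [← ENNReal.ofReal_add (by positivity) (by positivity)]
        congr 1
        ring

set_option maxHeartbeats 2000000 in
/-- Failure-probability bound for the Laplace-with-margin algorithm: if `{L_v}_{v ∈ M}`
is a partition of a finite set `V` of size `n`, and `(Y_u)_{u ∈ V}` are independent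
`Lap(1/ε)` random variables, then the probability that some block `L_v` has
`|Σ_{u ∈ L_v} Y_u| > (2/ε)·√|L_v|·ln(2n/α)` is at most `α`. -/
theorem laplace_margin_failure_probability
    {V : Type*} [Fintype V] (n : ℕ) (hn : Fintype.card V = n) (hn1 : 1 ≤ n)
    {M : Type*} [Fintype M] (L : M → Finset V)
    (hdisj : ∀ v w : M, v ≠ w → Disjoint (L v) (L w))
    (hcover : ∀ u : V, ∃ v : M, u ∈ L v)
    (ε α : ℝ) (hε : 0 < ε) (hα : 0 < α) (hα1 : α ≤ 1)
    {Ω : Type*} [MeasurableSpace Ω] (P : Measure Ω) [IsProbabilityMeasure P]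
    (Y : V → Ω → ℝ) (hmeas : ∀ u, Measurable (Y u))
    (hindep : iIndepFun Y P)
    (hdist : ∀ u, Measure.map (Y u) P = lapMeasure (1 / ε)) :
    P {ω | ∃ v : M,
        (2 / ε) * Real.sqrt ((L v).card) * Real.log (2 * n / α) < |∑ u ∈ L v, Y u ω|}
      ≤ ENNReal.ofReal α := by
  classical
  have hn0 : (0:ℝ) < n := by exact_mod_cast hn1
  have hb : (0:ℝ) < 1/ε := by positivity
  have hbinv : 1/(1/ε) = ε := one_div_one_div ε
  set Lg : ℝ := Real.log (2 * (n:ℝ) / α) with hLgdef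
  have hn1' : (1:ℝ) ≤ (n:ℝ) := by exact_mod_cast hn1
  have hratio : (2:ℝ) ≤ 2*(n:ℝ)/α := by
    rw [le_div_iff₀ hα]
    linarith
  have hlog2pos : (0:ℝ) < Real.log 2 := Real.log_pos (by norm_num)
  have hLg2 : Real.log 2 ≤ Lg := Real.log_le_log (by norm_num) hratio
  have hLg0 : 0 < Lg := lt_of_lt_of_le hlog2pos hLg2
  have hEL : Real.exp (-Lg) = α/(2*(n:ℝ)) := by
    rw [hLgdef, Real.exp_neg, Real.exp_log (by positivity), inv_div]
  clear_value Lg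
  -- the per-block bound
  have key : ∀ v : M, (L v).Nonempty →
      P {ω | 2 / ε * Real.sqrt ((L v).card : ℝ) * Lg < |∑ u ∈ L v, Y u ω|}
        ≤ ENNReal.ofReal (((L v).card : ℝ) * (α/(n:ℝ))) := by
    intro v hv
    set A : Finset V := L v with hA
    set k : ℕ := A.card with hk
    have hk1 : 1 ≤ k := Finset.card_pos.mpr hv
    set K : ℝ := (k : ℝ) with hKdef
    have hK1 : (1:ℝ) ≤ K := by rw [hKdef]; exact_mod_cast hk1
    have hKpos : (0:ℝ) < K := by linarith
    set sq : ℝ := Real.sqrt K with hsq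
    have hsqpos : 0 < sq := Real.sqrt_pos.mpr hKpos
    have hsqsq : sq^2 = K := Real.sq_sqrt (by linarith)
    set T : ℝ := 2 / ε * sq * Lg with hT
    have hTb : T = 2*(1/ε)*sq*Lg := by rw [hT]; ring
    have hT0 : 0 < T := by rw [hTb]; positivity
    have hms : MeasurableSet {x : ℝ | T < |x|} :=
      measurableSet_lt measurable_const measurable_id.abs
    have hsqne : sq ≠ 0 := ne_of_gt hsqpos
    have hKne : K ≠ 0 := ne_of_gt hKpos
    clear_value A k K sq T
    rcases eq_or_lt_of_le hk1 with hkone | hk2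
    · -- singleton block: exact tail bound
      have hA1 : A.card = 1 := by rw [← hk, ← hkone]
      obtain ⟨u, hu⟩ := Finset.card_eq_one.mp hA1
      have hKone : K = 1 := by rw [hKdef, ← hkone]; norm_num
      have hEv : {ω | T < |∑ u' ∈ A, Y u' ω|} = Y u ⁻¹' {x : ℝ | T < |x|} := by
        ext ω
        simp only [Set.mem_setOf_eq, Set.mem_preimage, hu, Finset.sum_singleton]
      calc P {ω | T < |∑ u' ∈ A, Y u' ω|}
          = (Measure.map (Y u) P) {x : ℝ | T < |x|} := by
            rw [Measure.map_apply (hmeas u) hms, hEv]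
        _ = lapMeasure (1/ε) {x : ℝ | T < |x|} := by rw [hdist u]
        _ ≤ ENNReal.ofReal (Real.exp (-T/(1/ε))) := lap_tail hb hT0.le
        _ ≤ ENNReal.ofReal (K * (α/(n:ℝ))) := by
            apply ENNReal.ofReal_le_ofReal
            have hsq1 : sq = 1 := by rw [hsq, hKone, Real.sqrt_one]
            have hTeq : -T/(1/ε) = -Lg + -Lg := by
              rw [hTb, hsq1]
              field_simp
              ring
            rw [hTeq, Real.exp_add, hEL, hKone, one_mul]
            rw [div_mul_div_comm, div_le_div_iff₀ (by positivity) (by positivity)]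
            nlinarith [mul_nonneg (mul_nonneg hα.le hn0.le) (sub_nonneg.mpr hα1),
              mul_nonneg (mul_nonneg hα.le hn0.le) (by linarith : (0:ℝ) ≤ 4*(n:ℝ) - 1)]
    · -- blocks of size ≥ 2 : Chernoff bound
      have hK2 : (2:ℝ) ≤ K := by
        have h2k : 2 ≤ k := hk2
        rw [hKdef]
        exact_mod_cast h2k
      have hlogK : Real.log 2 ≤ Real.log K := Real.log_le_log (by norm_num) hK2
      have hsq1 : (1:ℝ) ≤ sq := by
        rw [hsq, show (1:ℝ) = Real.sqrt 1 by rw [Real.sqrt_one]]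
        exact Real.sqrt_le_sqrt (by linarith)
      -- choose the Chernoff parameter
      obtain ⟨x, hx0, hxhalf, hstar⟩ : ∃ x : ℝ, 0 < x ∧ x ≤ 1/2 ∧
          Lg - Real.log K ≤ 2*sq*Lg*x + K * Real.log (1 - x^2) := by
        rcases le_or_gt Lg sq with hcase | hcase
        · refine ⟨Lg/(2*sq), by positivity, ?_, ?_⟩
          · rw [div_le_div_iff₀ (by positivity) (by norm_num)]
            nlinarith
          · have hx2 : (Lg/(2*sq))^2 = Lg^2/(4*K) := by
              rw [div_pow, mul_pow, hsqsq]
              norm_num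
            have hy0 : (0:ℝ) ≤ Lg^2/(4*K) := by positivity
            have hLgK : Lg^2 ≤ K := by
              rw [← hsqsq]
              exact pow_le_pow_left₀ hLg0.le hcase 2
            have hy4 : Lg^2/(4*K) ≤ 1/4 := by
              rw [div_le_div_iff₀ (by positivity) (by norm_num)]
              linarith
            have hlog : -(4/3*(Lg^2/(4*K))) ≤ Real.log (1 - Lg^2/(4*K)) := by
              have h := log_one_sub_ge (y := Lg^2/(4*K)) (by linarith)
              have h2 : (Lg^2/(4*K))/(1-Lg^2/(4*K)) ≤ 4/3*(Lg^2/(4*K)) := by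
                rw [div_le_iff₀ (by linarith)]
                nlinarith [mul_nonneg hy0 (by linarith : (0:ℝ) ≤ 1/4 - Lg^2/(4*K))]
              linarith
            have hterm : 2*sq*Lg*(Lg/(2*sq)) = Lg^2 := by
              field_simp
            have hKy : K * (4/3*(Lg^2/(4*K))) = Lg^2/3 := by
              field_simp
            have hq := quad_aux Lg
            have hKlog : -(Lg^2/3) ≤ K * Real.log (1 - Lg^2/(4*K)) := by
              have := mul_le_mul_of_nonneg_left hlog hKpos.le
              rw [mul_neg, hKy] at this
              linarith
            rw [hterm, hx2]
            linarith
        · refine ⟨1/2, by norm_num, le_refl _, ?_⟩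
          have hlog34 : -(1/3 : ℝ) ≤ Real.log (1 - (1/2:ℝ)^2) := by
            have h := log_one_sub_ge (y := (1/4:ℝ)) (by norm_num)
            norm_num at h ⊢
            linarith
          have hq := quad_aux sq
          have hmul : sq*(sq - 1) ≤ Lg*(sq - 1) :=
            mul_le_mul_of_nonneg_right hcase.le (by linarith)
          have hKlog : -(K/3) ≤ K * Real.log (1 - (1/2:ℝ)^2) := by
            nlinarith
          nlinarith
      -- Chernoff machinery
      have hx1 : x < 1 := lt_of_le_of_lt hxhalf (by norm_num)
      have hx2lt : x^2 < 1 := by nlinarith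
      have hx2pos : 0 < 1 - x^2 := by linarith
      set lam : ℝ := x/(1/ε) with hlam
      have hlam0 : 0 < lam := by rw [hlam]; positivity
      have hlamb : |lam| < 1/(1/ε) := by
        rw [abs_of_pos hlam0, hlam, div_lt_div_iff₀ hb hb]
        nlinarith
      have hlamb' : |(-lam)| < 1/(1/ε) := by rwa [abs_neg]
      have hlamx : lam^2*(1/ε)^2 = x^2 := by
        rw [hlam]
        field_simp
      have hlamT : lam*T = 2*sq*Lg*x := by
        rw [hlam, hTb]
        field_simp
      clear_value lam
      have hexpmeas : ∀ t' : ℝ, Measurable fun y : ℝ => Real.exp (t' * y) :=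
        fun t' => Real.measurable_exp.comp (measurable_const.mul measurable_id)
      have hmgfu : ∀ t' : ℝ, |t'| < 1/(1/ε) → ∀ u : V,
          mgf (Y u) P t' = 1/(1 - t'^2*(1/ε)^2) := by
        intro t' ht' u
        have h := integral_map (μ := P) (φ := Y u) (hmeas u).aemeasurable
          (f := fun y => Real.exp (t' * y)) (hexpmeas t').aestronglyMeasurable
        simp only [mgf]
        rw [← h, hdist u, lap_mgf_eq hb ht']
      have hintu : ∀ t' : ℝ, |t'| < 1/(1/ε) → ∀ u : V,
          Integrable (fun ω => Real.exp (t' * Y u ω)) P := by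
        intro t' ht' u
        have h := lap_exp_integrable hb ht'
        rw [← hdist u] at h
        exact (integrable_map_measure (hexpmeas t').aestronglyMeasurable
          (hmeas u).aemeasurable).mp h
      have hSint : Integrable (fun ω => Real.exp (lam * (∑ u ∈ A, Y u) ω)) P :=
        hindep.integrable_exp_mul_sum hmeas (fun u _ => hintu lam hlamb u)
      have hSint' : Integrable (fun ω => Real.exp ((-lam) * (∑ u ∈ A, Y u) ω)) P :=
        hindep.integrable_exp_mul_sum hmeas (fun u _ => hintu (-lam) hlamb' u)
      have hmgfS : ∀ t' : ℝ, |t'| < 1/(1/ε) →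
          mgf (∑ u ∈ A, Y u) P t' = (1/(1 - t'^2*(1/ε)^2))^k := by
        intro t' ht'
        rw [hindep.mgf_sum hmeas A, Finset.prod_congr rfl (fun u _ => hmgfu t' ht' u),
          Finset.prod_const, ← hk]
      have hup : (P {ω | T ≤ (∑ u ∈ A, Y u) ω}).toReal
          ≤ Real.exp (-lam*T) * (1/(1-x^2))^k := by
        have h := measure_ge_le_exp_mul_mgf (μ := P) (X := ∑ u ∈ A, Y u) T hlam0.le hSint
        rwa [hmgfS lam hlamb, hlamx] at h
      have hlow : (P {ω | (∑ u ∈ A, Y u) ω ≤ -T}).toReal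
          ≤ Real.exp (-lam*T) * (1/(1-x^2))^k := by
        have h := measure_le_le_exp_mul_mgf (μ := P) (X := ∑ u ∈ A, Y u) (-T)
          (neg_nonpos.mpr hlam0.le) hSint'
        have h2 : (-lam)^2*(1/ε)^2 = x^2 := by rw [neg_pow]; simpa using hlamx
        rwa [hmgfS (-lam) hlamb', h2, show -(-lam) * -T = -lam*T by ring] at h
      have hbound : Real.exp (-lam*T) * (1/(1-x^2))^k ≤ K * (α/(2*(n:ℝ))) := by
        have e1 : 1/(1-x^2) = Real.exp (-Real.log (1-x^2)) := by
          rw [Real.exp_neg, Real.exp_log hx2pos, one_div]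
        have hpow : (1/(1-x^2))^k = Real.exp (-(K * Real.log (1-x^2))) := by
          rw [e1, ← Real.exp_nat_mul]
          congr 1
          rw [hKdef]
          push_cast
          ring
        rw [hpow, ← Real.exp_add]
        have hLT : -lam*T + -(K*Real.log (1-x^2)) ≤ Real.log K + -Lg := by
          rw [neg_mul, hlamT]
          linarith
        calc Real.exp (-lam*T + -(K*Real.log (1-x^2)))
            ≤ Real.exp (Real.log K + -Lg) := Real.exp_le_exp.mpr hLT
          _ = K * (α/(2*(n:ℝ))) := by rw [Real.exp_add, Real.exp_log hKpos, hEL]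
      have hup' : P {ω | T ≤ (∑ u ∈ A, Y u) ω} ≤ ENNReal.ofReal (K * (α/(2*(n:ℝ)))) := by
        rw [← ENNReal.ofReal_toReal (measure_ne_top P _)]
        exact ENNReal.ofReal_le_ofReal (le_trans hup hbound)
      have hlow' : P {ω | (∑ u ∈ A, Y u) ω ≤ -T} ≤ ENNReal.ofReal (K * (α/(2*(n:ℝ)))) := by
        rw [← ENNReal.ofReal_toReal (measure_ne_top P _)]
        exact ENNReal.ofReal_le_ofReal (le_trans hlow hbound)
      have hsubset : {ω | T < |∑ u' ∈ A, Y u' ω|}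
          ⊆ {ω | T ≤ (∑ u ∈ A, Y u) ω} ∪ {ω | (∑ u ∈ A, Y u) ω ≤ -T} := by
        intro ω hω
        simp only [Set.mem_setOf_eq] at hω
        simp only [Set.mem_union, Set.mem_setOf_eq, Finset.sum_apply]
        rcases lt_abs.mp hω with h | h
        · exact Or.inl h.le
        · exact Or.inr (by linarith)
      calc P {ω | T < |∑ u' ∈ A, Y u' ω|}
          ≤ P ({ω | T ≤ (∑ u ∈ A, Y u) ω} ∪ {ω | (∑ u ∈ A, Y u) ω ≤ -T}) :=
            measure_mono hsubset
        _ ≤ P {ω | T ≤ (∑ u ∈ A, Y u) ω} + P {ω | (∑ u ∈ A, Y u) ω ≤ -T} :=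
            measure_union_le _ _
        _ ≤ ENNReal.ofReal (K * (α/(2*(n:ℝ)))) + ENNReal.ofReal (K * (α/(2*(n:ℝ)))) :=
            add_le_add hup' hlow'
        _ = ENNReal.ofReal (K * (α/(n:ℝ))) := by
            rw [← ENNReal.ofReal_add (by positivity) (by positivity)]
            congr 1
            field_simp
            ring
  -- assemble via the union bound
  set t : Finset M := Finset.univ.filter (fun v => (L v).Nonempty) with htdef
  have hsubset : {ω | ∃ v : M, 2 / ε * Real.sqrt ((L v).card : ℝ) * Lg < |∑ u ∈ L v, Y u ω|}
      ⊆ ⋃ v ∈ t, {ω | 2 / ε * Real.sqrt ((L v).card : ℝ) * Lg < |∑ u ∈ L v, Y u ω|} := by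
    intro ω hω
    obtain ⟨v, hv⟩ := hω
    have hne : (L v).Nonempty := by
      by_contra h
      rw [Finset.not_nonempty_iff_eq_empty] at h
      rw [h] at hv
      simp at hv
    exact Set.mem_biUnion (Finset.mem_filter.mpr ⟨Finset.mem_univ v, hne⟩) hv
  have hsum_card : (∑ v ∈ t, (L v).card) ≤ n := by
    rw [← Finset.card_biUnion (fun v _ w _ hvw => hdisj v w hvw), ← hn]
    exact Finset.card_le_univ _
  calc P {ω | ∃ v : M, 2 / ε * Real.sqrt ((L v).card : ℝ) * Lg < |∑ u ∈ L v, Y u ω|}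
      ≤ P (⋃ v ∈ t, {ω | 2 / ε * Real.sqrt ((L v).card : ℝ) * Lg < |∑ u ∈ L v, Y u ω|}) :=
        measure_mono hsubset
    _ ≤ ∑ v ∈ t, P {ω | 2 / ε * Real.sqrt ((L v).card : ℝ) * Lg < |∑ u ∈ L v, Y u ω|} :=
        measure_biUnion_finset_le _ _
    _ ≤ ∑ v ∈ t, ENNReal.ofReal (((L v).card : ℝ) * (α/(n:ℝ))) :=
        Finset.sum_le_sum (fun v hv => key v (Finset.mem_filter.mp hv).2)
    _ = ENNReal.ofReal (∑ v ∈ t, ((L v).card : ℝ) * (α/(n:ℝ))) :=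
        (ENNReal.ofReal_sum_of_nonneg (fun v _ => by positivity)).symm
    _ ≤ ENNReal.ofReal α := by
        apply ENNReal.ofReal_le_ofReal
        rw [← Finset.sum_mul]
        have h1 : (∑ v ∈ t, ((L v).card:ℝ)) ≤ (n:ℝ) := by exact_mod_cast hsum_card
        calc (∑ v ∈ t, ((L v).card:ℝ)) * (α/(n:ℝ))
            ≤ (n:ℝ) * (α/(n:ℝ)) := mul_le_mul_of_nonneg_right h1 (by positivity)
          _ = α := by field_simp
end

section
/- Assume b_u ≥ 1 for every u ∈ V. Then Σ_{v∈M} √(|L_v|)·f_v ≤ OPT. -/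
open Finset

/-- If every location hosts at least one client (`b_u ≥ 1`), then
`Σ_{v ∈ M} √|L_v| · f_v ≤ OPT`, where `M` is the marked set of an optimal connection
function `h`, `L_v` is the set of locations connected to `v`, and
`OPT = Σ_u b_u (f_{h(u)} + d(u, h(u)))`. -/
theorem sqrt_card_facility_cost_le_OPT
    {V : Type*} [Fintype V] [DecidableEq V] [MetricSpace V]
    (f : V → ℝ) (hf : ∀ v, 0 ≤ f v)
    (b : V → ℕ) (hb : ∀ u, 1 ≤ b u)
    (h : V → V)
    (hopt : ∀ u x : V, f (h u) + dist u (h u) ≤ f x + dist u x)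
    (hidem : ∀ u, h (h u) = h u) :
    ∑ v ∈ univ.filter (fun v => h v = v),
        Real.sqrt ((univ.filter (fun u => h u = v)).card) * f v
      ≤ ∑ u, (b u : ℝ) * (f (h u) + dist u (h u)) := by
  have hmap : ∀ u ∈ (univ : Finset V), h u ∈ univ.filter (fun v => h v = v) := by
    intro u _
    simp [hidem u]
  rw [← Finset.sum_fiberwise_of_maps_to hmap (fun u => (b u : ℝ) * (f (h u) + dist u (h u)))]
  apply Finset.sum_le_sum
  intro v hv
  have hterm : ∀ u ∈ univ.filter (fun u => h u = v),
      f v ≤ (b u : ℝ) * (f (h u) + dist u (h u)) := by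
    intro u hu
    have huv : h u = v := by simpa using hu
    have h1 : f v ≤ f (h u) + dist u (h u) := by
      rw [huv]; nlinarith [dist_nonneg (x := u) (y := v)]
    calc f v ≤ f (h u) + dist u (h u) := h1
      _ = 1 * (f (h u) + dist u (h u)) := by ring
      _ ≤ (b u : ℝ) * (f (h u) + dist u (h u)) := by
          apply mul_le_mul_of_nonneg_right
          · exact_mod_cast hb u
          · have := dist_nonneg (x := u) (y := h u)
            have := hf (h u)
            linarith
  have hcard : Real.sqrt ((univ.filter (fun u => h u = v)).card) * f v
      ≤ ((univ.filter (fun u => h u = v)).card : ℝ) * f v := by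
    apply mul_le_mul_of_nonneg_right _ (hf v)
    set n := (univ.filter (fun u => h u = v)).card with hn
    rcases Nat.eq_zero_or_pos n with h0 | h1
    · simp [h0]
    · have : (1 : ℝ) ≤ n := by exact_mod_cast h1
      nlinarith [Real.sq_sqrt (by positivity : (0:ℝ) ≤ (n:ℝ)), Real.sqrt_nonneg (n:ℝ)]
  calc Real.sqrt ((univ.filter (fun u => h u = v)).card) * f v
      ≤ ((univ.filter (fun u => h u = v)).card : ℝ) * f v := hcard
    _ = ∑ _u ∈ univ.filter (fun u => h u = v), f v := by
        rw [Finset.sum_const, nsmul_eq_mul]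
    _ ≤ _ := Finset.sum_le_sum hterm
end

section
/- The extra cost incurred by reconnection is at most 4δ times the total number of clients: Σ_{u∈V} b_u·(f_{ĥ(u)} + d(u,ĥ(u))) ≤ OPT + 4δ·Σ_{u∈V} b_u. Equivalently, writing b_avg = (1/n)·Σ_{v∈V} b_v, the reconnected cost exceeds OPT by at most 4δ·n·b_avg. -/
open Finset

/-- The extra cost incurred by reconnection is at most `4δ` times the total number of
clients: `Σ_u b_u·(f_{ĥ(u)} + d(u, ĥ(u))) ≤ OPT + 4δ·Σ_u b_u`, i.e. the reconnected
cost exceeds `OPT` by at most `4δ·n·b_avg`. Here `g` plays the role of `ĥ`. -/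
theorem reconnection_extra_cost
    {V : Type*} [Fintype V] [DecidableEq V] [MetricSpace V]
    (f : V → ℝ) (hf : ∀ v, 0 ≤ f v)
    (b : V → ℕ)
    (h : V → V)
    (hopt : ∀ u x : V, f (h u) + dist u (h u) ≤ f x + dist u x)
    (hidem : ∀ u, h (h u) = h u)
    (δ : ℝ) (hδ : 0 < δ)
    (I : Finset V) (hIM : ∀ v ∈ I, h v = v)
    (hsep : ∀ u ∈ I, ∀ v ∈ I, u ≠ v → 2 * δ < dist u v)
    (hmaximal : ∀ w : V, h w = w → ∃ x ∈ I, dist w x ≤ 2 * δ ∧ f x ≤ f w)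
    (g : V → V) (hgI : ∀ u, g u ∈ I)
    (hnear : ∀ u v : V, v ∈ I → dist u v ≤ δ → g u = v)
    (hfar : ∀ u : V, (∀ v ∈ I, δ < dist u v) →
      ∀ x ∈ I, f (g u) + dist u (g u) ≤ f x + dist u x) :
    ∑ u, (b u : ℝ) * (f (g u) + dist u (g u))
      ≤ (∑ u, (b u : ℝ) * (f (h u) + dist u (h u))) + 4 * δ * ∑ u, (b u : ℝ) := by
  have key : ∀ u, f (g u) + dist u (g u) ≤ f (h u) + dist u (h u) + 4 * δ := by
    intro u
    by_cases hc : ∃ v ∈ I, dist u v ≤ δ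
    · obtain ⟨v, hvI, hvd⟩ := hc
      rw [hnear u v hvI hvd]
      have hv : h v = v := hIM v hvI
      have h1 : f v ≤ f (h u) + dist v (h u) := by
        have := hopt v (h u); rw [hv] at this; linarith [dist_nonneg (x := v) (y := v), dist_self v ▸ this]
      have h2 : dist v (h u) ≤ dist v u + dist u (h u) := dist_triangle _ _ _
      have h3 : dist v u ≤ δ := by rw [dist_comm]; exact hvd
      linarith
    · push_neg at hc
      obtain ⟨x, hxI, hxd, hxf⟩ := hmaximal (h u) (hidem u)
      have h1 := hfar u hc x hxI
      have h2 : dist u x ≤ dist u (h u) + dist (h u) x := dist_triangle _ _ _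
      linarith
  calc ∑ u, (b u : ℝ) * (f (g u) + dist u (g u))
      ≤ ∑ u, (b u : ℝ) * (f (h u) + dist u (h u) + 4 * δ) := by
        apply Finset.sum_le_sum; intro u _
        exact mul_le_mul_of_nonneg_left (key u) (Nat.cast_nonneg _)
    _ = (∑ u, (b u : ℝ) * (f (h u) + dist u (h u))) + 4 * δ * ∑ u, (b u : ℝ) := by
        rw [Finset.mul_sum]
        rw [← Finset.sum_add_distrib]
        congr 1; ext u; ring
end

section
/- For every u ∈ V, the facility cost of the reconnected facility of u is at most the optimal per-location cost of u plus δ: f_{ĥ(u)} ≤ f_{h(u)} + d(u,h(u)) + δ. -/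
open Finset

/-- For every location `u`, the facility cost of the reconnected facility of `u` is at
most the optimal per-location cost of `u` plus `δ`:
`f_{ĥ(u)} ≤ f_{h(u)} + d(u, h(u)) + δ`. Here `g` plays the role of `ĥ`. -/
theorem reconnection_facility_cost_bound
    {V : Type*} [Fintype V] [DecidableEq V] [MetricSpace V]
    (f : V → ℝ) (hf : ∀ v, 0 ≤ f v)
    (b : V → ℕ)
    (h : V → V)
    (hopt : ∀ u x : V, f (h u) + dist u (h u) ≤ f x + dist u x)
    (hidem : ∀ u, h (h u) = h u)
    (δ : ℝ) (hδ : 0 < δ)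
    (I : Finset V) (hIM : ∀ v ∈ I, h v = v)
    (hsep : ∀ u ∈ I, ∀ v ∈ I, u ≠ v → 2 * δ < dist u v)
    (hmaximal : ∀ w : V, h w = w → ∃ x ∈ I, dist w x ≤ 2 * δ ∧ f x ≤ f w)
    (g : V → V) (hgI : ∀ u, g u ∈ I)
    (hnear : ∀ u v : V, v ∈ I → dist u v ≤ δ → g u = v)
    (hfar : ∀ u : V, (∀ v ∈ I, δ < dist u v) →
      ∀ x ∈ I, f (g u) + dist u (g u) ≤ f x + dist u x) :
    ∀ u : V, f (g u) ≤ f (h u) + dist u (h u) + δ := by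
  intro u
  by_cases hc : ∃ v ∈ I, dist u v ≤ δ
  · obtain ⟨v, hvI, hvd⟩ := hc
    rw [hnear u v hvI hvd]
    have h1 : f (h v) + dist v (h v) ≤ f (h u) + dist v (h u) := hopt v (h u)
    rw [hIM v hvI] at h1
    simp only [dist_self, add_zero] at h1
    calc f v ≤ f (h u) + dist v (h u) := h1
      _ ≤ f (h u) + (dist v u + dist u (h u)) := by
          gcongr; exact dist_triangle v u (h u)
      _ ≤ f (h u) + dist u (h u) + δ := by
          rw [dist_comm v u]; linarith
  · push_neg at hc
    obtain ⟨x, hxI, hxd, hxf⟩ := hmaximal (h u) (hidem u)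
    have h1 := hfar u hc x hxI
    have h2 : δ < dist u (g u) := hc (g u) (hgI u)
    have h3 : dist u x ≤ dist u (h u) + dist (h u) x := dist_triangle u (h u) x
    linarith
end

section
/- For the admissible facility set I produced by reconnection, the sum of facility costs counted with one client per location stays bounded: Σ_{v∈I} |L̂_v|·f_v ≤ Σ_{u∈V} (f_{h(u)} + d(u,h(u))) + δ·n. (The right-hand side without the δ·n term is the optimal cost OPT when exactly one client is present at every location.) -/
open Finset

/-- For the admissible facility set `I` produced by reconnection, the sum of facility
costs counted with one client per location stays bounded:
`Σ_{v ∈ I} |L̂_v|·f_v ≤ Σ_u (f_{h(u)} + d(u, h(u))) + δ·n`. Here `g` plays the role of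
the reconnection function `ĥ` and `L̂_v = {u : g u = v}`. -/
theorem reconnection_facility_sum_bound
    {V : Type*} [Fintype V] [DecidableEq V] [MetricSpace V]
    (n : ℕ) (hn : Fintype.card V = n)
    (f : V → ℝ) (hf : ∀ v, 0 ≤ f v)
    (h : V → V)
    (hopt : ∀ u x : V, f (h u) + dist u (h u) ≤ f x + dist u x)
    (hidem : ∀ u, h (h u) = h u)
    (δ : ℝ) (hδ : 0 < δ)
    (I : Finset V) (hIM : ∀ v ∈ I, h v = v)
    (hsep : ∀ u ∈ I, ∀ v ∈ I, u ≠ v → 2 * δ < dist u v)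
    (hmaximal : ∀ w : V, h w = w → ∃ x ∈ I, dist w x ≤ 2 * δ ∧ f x ≤ f w)
    (g : V → V) (hgI : ∀ u, g u ∈ I)
    (hnear : ∀ u v : V, v ∈ I → dist u v ≤ δ → g u = v)
    (hfar : ∀ u : V, (∀ v ∈ I, δ < dist u v) →
      ∀ x ∈ I, f (g u) + dist u (g u) ≤ f x + dist u x) :
    ∑ v ∈ I, ((univ.filter (fun u => g u = v)).card : ℝ) * f v
      ≤ (∑ u, (f (h u) + dist u (h u))) + δ * n := by
  have key : ∀ u : V, f (g u) ≤ f (h u) + dist u (h u) + δ := by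
    intro u
    by_cases hc : ∃ v ∈ I, dist u v ≤ δ
    · obtain ⟨v, hvI, hvd⟩ := hc
      have hg : g u = v := hnear u v hvI hvd
      have hv : h v = v := hIM v hvI
      have := hopt v (h u)
      rw [hv] at this
      calc f (g u) = f v := by rw [hg]
        _ ≤ f (h u) + dist v (h u) := by simpa using this
        _ ≤ f (h u) + (dist v u + dist u (h u)) := by
            linarith [dist_triangle v u (h u)]
        _ ≤ f (h u) + dist u (h u) + δ := by
            rw [dist_comm v u]; linarith
    · push_neg at hc
      obtain ⟨x, hxI, hxd, hxf⟩ := hmaximal (h u) (hidem u)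
      have h1 := hfar u hc x hxI
      have h2 : δ < dist u (g u) := hc (g u) (hgI u)
      have h3 : dist u x ≤ dist u (h u) + dist (h u) x := dist_triangle u (h u) x
      linarith
  calc ∑ v ∈ I, ((univ.filter (fun u => g u = v)).card : ℝ) * f v
      = ∑ v ∈ I, ∑ u ∈ univ.filter (fun u => g u = v), f (g u) := by
        refine Finset.sum_congr rfl fun v hv => ?_
        rw [Finset.sum_congr rfl (fun u hu => by
          rw [(Finset.mem_filter.mp hu).2]),
          Finset.sum_const, nsmul_eq_mul]
    _ = ∑ u, f (g u) := Finset.sum_fiberwise_of_maps_to (fun u _ => hgI u) _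
    _ ≤ ∑ u, (f (h u) + dist u (h u) + δ) := Finset.sum_le_sum fun u _ => key u
    _ = (∑ u, (f (h u) + dist u (h u))) + δ * n := by
        rw [Finset.sum_add_distrib, Finset.sum_const, nsmul_eq_mul, ← hn,
          Fintype.card, mul_comm]
end

section
/- Let γ ≥ 1, suppose n ≥ 2, and suppose that for every v ∈ I the ball B(v,δ) = {u ∈ V : d(u,v) ≤ δ} satisfies |B(v,δ)| ≥ γ²·(ln n)². Then Σ_{v∈I} √(|L̂_v|)·f_v ≤ (1/(γ·ln n))·( Σ_{u∈V} (f_{h(u)} + d(u,h(u))) + δ·n ). -/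
open Finset

/-- Under the density assumption `|B(v,δ)| ≥ γ²·(ln n)²` for all `v ∈ I`, the margin
sum of the reconnection solution is bounded:
`Σ_{v ∈ I} √|L̂_v|·f_v ≤ (1/(γ·ln n))·(Σ_u (f_{h(u)} + d(u, h(u))) + δ·n)`.
Here `g` plays the role of `ĥ` and `L̂_v = {u : g u = v}`. -/
theorem reconnection_sqrt_sum_bound
    {V : Type*} [Fintype V] [DecidableEq V] [MetricSpace V]
    (n : ℕ) (hn : Fintype.card V = n) (hn2 : 2 ≤ n)
    (f : V → ℝ) (hf : ∀ v, 0 ≤ f v)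
    (h : V → V)
    (hopt : ∀ u x : V, f (h u) + dist u (h u) ≤ f x + dist u x)
    (hidem : ∀ u, h (h u) = h u)
    (δ : ℝ) (hδ : 0 < δ)
    (I : Finset V) (hIM : ∀ v ∈ I, h v = v)
    (hsep : ∀ u ∈ I, ∀ v ∈ I, u ≠ v → 2 * δ < dist u v)
    (hmaximal : ∀ w : V, h w = w → ∃ x ∈ I, dist w x ≤ 2 * δ ∧ f x ≤ f w)
    (g : V → V) (hgI : ∀ u, g u ∈ I)
    (hnear : ∀ u v : V, v ∈ I → dist u v ≤ δ → g u = v)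
    (hfar : ∀ u : V, (∀ v ∈ I, δ < dist u v) →
      ∀ x ∈ I, f (g u) + dist u (g u) ≤ f x + dist u x)
    (γ : ℝ) (hγ : 1 ≤ γ)
    (hball : ∀ v ∈ I,
      γ ^ 2 * Real.log n ^ 2 ≤ ((univ.filter (fun u => dist u v ≤ δ)).card : ℝ)) :
    ∑ v ∈ I, Real.sqrt ((univ.filter (fun u => g u = v)).card) * f v
      ≤ (1 / (γ * Real.log n)) * ((∑ u, (f (h u) + dist u (h u))) + δ * n) := by
  have hn1 : (1:ℝ) < n := by exact_mod_cast lt_of_lt_of_le one_lt_two hn2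
  have hlog : 0 < Real.log n := Real.log_pos hn1
  set c : ℝ := γ * Real.log n with hc
  have hcpos : 0 < c := mul_pos (lt_of_lt_of_le one_pos hγ) hlog
  -- per-v bound: √|L v| ≤ |L v| / c
  have hsqrt : ∀ v ∈ I, Real.sqrt ((univ.filter (fun u => g u = v)).card)
      ≤ ((univ.filter (fun u => g u = v)).card : ℝ) / c := by
    intro v hv
    set x : ℝ := ((univ.filter (fun u => g u = v)).card : ℝ) with hxdef
    have hsub : (univ.filter (fun u => dist u v ≤ δ)) ⊆ (univ.filter fun u => g u = v) := by
      intro u hu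
      simp only [mem_filter, mem_univ, true_and] at hu ⊢
      exact hnear u v hv hu
    have hcard : c ^ 2 ≤ x := by
      calc c ^ 2 = γ ^ 2 * Real.log n ^ 2 := by ring
        _ ≤ ((univ.filter (fun u => dist u v ≤ δ)).card : ℝ) := hball v hv
        _ ≤ x := by rw [hxdef]; exact_mod_cast Finset.card_le_card hsub
    have hx0 : (0:ℝ) ≤ x := Nat.cast_nonneg _
    have hcs : c ≤ Real.sqrt x := by
      have h1 := Real.sqrt_le_sqrt hcard
      rwa [Real.sqrt_sq hcpos.le] at h1
    rw [le_div_iff₀ hcpos]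
    calc Real.sqrt x * c ≤ Real.sqrt x * Real.sqrt x :=
          mul_le_mul_of_nonneg_left hcs (Real.sqrt_nonneg _)
      _ = x := Real.mul_self_sqrt hx0
  -- per-u bound: f (g u) ≤ f (h u) + dist u (h u) + δ
  have hper : ∀ u, f (g u) ≤ f (h u) + dist u (h u) + δ := by
    intro u
    by_cases hcase : ∃ v ∈ I, dist u v ≤ δ
    · obtain ⟨v, hv, hd⟩ := hcase
      have hg : g u = v := hnear u v hv hd
      have h1 := hopt v (h u)
      rw [hIM v hv, dist_self] at h1
      have h2 : dist v (h u) ≤ dist v u + dist u (h u) := dist_triangle _ _ _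
      have h3 : dist v u ≤ δ := by rwa [dist_comm]
      rw [hg]; linarith
    · push_neg at hcase
      obtain ⟨x, hxI, hdx, hfx⟩ := hmaximal (h u) (hidem u)
      have h1 := hfar u hcase x hxI
      have h2 : δ < dist u (g u) := hcase (g u) (hgI u)
      have h3 : dist u x ≤ dist u (h u) + dist (h u) x := dist_triangle _ _ _
      linarith
  -- sum identity
  have hfib : ∑ v ∈ I, ((univ.filter (fun u => g u = v)).card : ℝ) * f v
      = ∑ u, f (g u) := by
    rw [← Finset.sum_fiberwise_of_maps_to (fun u _ => hgI u) (fun u => f (g u))]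
    apply Finset.sum_congr rfl
    intro v hv
    rw [Finset.sum_congr rfl (fun u hu => by
      simp only [mem_filter] at hu; rw [hu.2]),
      Finset.sum_const, nsmul_eq_mul]
  have hsum2 : ∑ u, f (g u) ≤ (∑ u, (f (h u) + dist u (h u))) + δ * n := by
    calc ∑ u, f (g u) ≤ ∑ u : V, (f (h u) + dist u (h u) + δ) :=
          Finset.sum_le_sum (fun u _ => hper u)
      _ = (∑ u, (f (h u) + dist u (h u))) + δ * n := by
          rw [Finset.sum_add_distrib, Finset.sum_const, nsmul_eq_mul, Finset.card_univ, hn, mul_comm]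
  calc ∑ v ∈ I, Real.sqrt ((univ.filter (fun u => g u = v)).card) * f v
      ≤ ∑ v ∈ I, (((univ.filter (fun u => g u = v)).card : ℝ) / c) * f v :=
        Finset.sum_le_sum (fun v hv => mul_le_mul_of_nonneg_right (hsqrt v hv) (hf v))
    _ = (1 / c) * ∑ v ∈ I, ((univ.filter (fun u => g u = v)).card : ℝ) * f v := by
        rw [Finset.mul_sum]; apply Finset.sum_congr rfl; intro v _; ring
    _ ≤ (1 / c) * ((∑ u, (f (h u) + dist u (h u))) + δ * n) := by
        apply mul_le_mul_of_nonneg_left _ (by positivity)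
        rw [hfib]; exact hsum2
end

section
/- Assume b_u ≥ 1 for every u ∈ V, n ≥ 2, γ ≥ 1, ε > 0, 0 < α ≤ 1, and that for every v ∈ I the ball B(v,δ) = {u ∈ V : d(u,v) ≤ δ} satisfies |B(v,δ)| ≥ γ²·(ln n)². Let (Y_u)_{u∈V} be independent random variables each distributed as Lap(1/ε), and let b_avg = (1/n)·Σ_{v∈V} b_v. Then the expected cost of the reconnection solution satisfies E[ Σ_{v∈I} ( Σ_{u∈L̂_v}(b_u + Y_u) + (2/ε)·√(|L̂_v|)·ln(2n/α) )·f_v + Σ_{u∈V} b_u·d(u,ĥ(u)) ] ≤ (1 + (2/ε)·ln(2n/α)·(1/(γ·ln n)))·OPT + δ·n·(4·b_avg + (2/ε)·ln(2n/α)·(1/(γ·ln n))). -/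
open MeasureTheory ProbabilityTheory Finset

lemma integrable_exp_neg_abs {a : ℝ} (ha : 0 < a) :
    Integrable (fun x : ℝ => Real.exp (-a * |x|)) volume := by
  have hFIci : IntegrableOn (fun x : ℝ => Real.exp (-a * x)) (Set.Ici 0) := by
    rw [integrableOn_Ici_iff_integrableOn_Ioi]
    exact exp_neg_integrableOn_Ioi 0 ha
  set F : ℝ → ℝ := (Set.Ici (0:ℝ)).indicator (fun x => Real.exp (-a * x)) with hFdef
  have hF : Integrable F volume := (integrable_indicator_iff measurableSet_Ici).2 hFIci
  have hFn : Integrable (fun x => F (-x)) volume := hF.comp_neg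
  have hFnonneg : ∀ x, 0 ≤ F x := fun x =>
    Set.indicator_nonneg (fun y _ => (Real.exp_pos _).le) x
  refine Integrable.mono' (hF.add hFn)
    ((Real.continuous_exp.comp ((continuous_const.mul continuous_abs))).aestronglyMeasurable)
    (Filter.Eventually.of_forall fun x => ?_)
  rw [Real.norm_eq_abs, abs_of_pos (Real.exp_pos _)]
  rcases le_or_gt 0 x with hx | hx
  · have h1 : F x = Real.exp (-a * x) := Set.indicator_of_mem hx _
    have h2 : Real.exp (-a * |x|) = F x := by rw [h1, abs_of_nonneg hx]
    rw [h2]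
    simpa using hFnonneg (-x)
  · have h1 : F (-x) = Real.exp (-a * (-x)) :=
      Set.indicator_of_mem (Set.mem_Ici.mpr (by linarith)) _
    have h2 : Real.exp (-a * |x|) = F (-x) := by rw [h1, abs_of_neg hx]
    rw [h2]
    simpa using hFnonneg x

lemma integrable_mul_exp_neg_abs {a : ℝ} (ha : 0 < a) :
    Integrable (fun x : ℝ => x * Real.exp (-a * |x|)) volume := by
  have h2 : (0:ℝ) < a / 2 := by linarith
  refine Integrable.mono' ((integrable_exp_neg_abs h2).const_mul (2 / a))
    ((continuous_id.mul (Real.continuous_exp.comp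
      (continuous_const.mul continuous_abs))).aestronglyMeasurable)
    (Filter.Eventually.of_forall fun x => ?_)
  rw [Real.norm_eq_abs, abs_mul, abs_of_pos (Real.exp_pos _)]
  have key : |x| * Real.exp (-(a/2) * |x|) ≤ 2 / a := by
    have h3 : (a/2) * |x| ≤ Real.exp ((a/2) * |x|) := (Real.add_one_le_exp _).trans' (by linarith)
    have h4 : 0 < Real.exp ((a/2) * |x|) := Real.exp_pos _
    rw [show -(a/2) * |x| = -((a/2) * |x|) by ring, Real.exp_neg, ← div_eq_mul_inv,
      div_le_div_iff₀ h4 ha]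
    nlinarith [abs_nonneg x]
  have h5 : Real.exp (-a * |x|) = Real.exp (-(a/2) * |x|) * Real.exp (-(a/2) * |x|) := by
    rw [← Real.exp_add]; ring_nf
  rw [h5]
  calc |x| * (Real.exp (-(a/2) * |x|) * Real.exp (-(a/2) * |x|))
      = (|x| * Real.exp (-(a/2) * |x|)) * Real.exp (-(a/2) * |x|) := by ring
    _ ≤ (2/a) * Real.exp (-(a/2) * |x|) :=
        mul_le_mul_of_nonneg_right key (Real.exp_pos _).le

lemma lapDensity_cont (s : ℝ) :
    Continuous (fun x : ℝ => (1 / (2 * s)) * Real.exp (-|x| / s)) := by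
  fun_prop

lemma lapMeasure_integrable_id {s : ℝ} (hs : 0 < s) :
    Integrable (fun x : ℝ => x) (lapMeasure s) := by
  unfold lapMeasure
  rw [integrable_withDensity_iff ((lapDensity_cont s).measurable.ennreal_ofReal)
    (ae_of_all _ fun x => ENNReal.ofReal_lt_top)]
  have h1 : ∀ x : ℝ, x * (ENNReal.ofReal ((1 / (2 * s)) * Real.exp (-|x| / s))).toReal
      = (1 / (2 * s)) * (x * Real.exp (-(1/s) * |x|)) := by
    intro x
    rw [ENNReal.toReal_ofReal (by positivity)]
    rw [show -|x| / s = -(1/s) * |x| by ring]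
    ring
  simp_rw [h1]
  exact ((integrable_mul_exp_neg_abs (by positivity : (0:ℝ) < 1/s)).const_mul _)

lemma lapMeasure_integral_id {s : ℝ} (hs : 0 < s) :
    (∫ x, x ∂(lapMeasure s)) = 0 := by
  have hd : lapMeasure s = volume.withDensity
      (fun x => ((((1 / (2 * s)) * Real.exp (-|x| / s)).toNNReal : NNReal) : ENNReal)) := rfl
  have hm : Measurable (fun x : ℝ => ((1 / (2 * s)) * Real.exp (-|x| / s)).toNNReal) :=
    (lapDensity_cont s).measurable.real_toNNReal
  rw [hd, integral_withDensity_eq_integral_smul hm (fun x : ℝ => x)]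
  set φ : ℝ → ℝ := fun x => (1 / (2 * s)) * Real.exp (-|x| / s) * x with hφ
  have h2 : (fun x : ℝ => (((1 / (2 * s)) * Real.exp (-|x| / s)).toNNReal : NNReal) • x) = φ := by
    funext x
    rw [NNReal.smul_def, Real.coe_toNNReal _ (by positivity), smul_eq_mul]
  rw [h2]
  have hodd := integral_neg_eq_self φ volume
  have h3 : (fun x => φ (-x)) = fun x => -φ x := by
    funext x; simp only [hφ, abs_neg]; ring
  rw [h3, integral_neg] at hodd
  linarith


/-- Expected-cost bound for the `ε`-LDP reconnection algorithm: under the density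
assumption `|B(v,δ)| ≥ γ²·(ln n)²` for all `v ∈ I`, with independent `Lap(1/ε)` noises
`(Y_u)` and `b_u ≥ 1` everywhere, the expected cost of the reconnection solution is at
most `(1 + (2/ε)·ln(2n/α)·(1/(γ·ln n)))·OPT + δ·n·(4·b_avg + (2/ε)·ln(2n/α)·(1/(γ·ln n)))`.
Here `g` plays the role of `ĥ` and `L̂_v = {u : g u = v}`. -/
theorem reconnection_expected_cost
    {V : Type*} [Fintype V] [DecidableEq V] [MetricSpace V]
    (n : ℕ) (hn : Fintype.card V = n) (hn2 : 2 ≤ n)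
    (f : V → ℝ) (hf : ∀ v, 0 ≤ f v)
    (b : V → ℕ) (hb : ∀ u, 1 ≤ b u)
    (h : V → V)
    (hopt : ∀ u x : V, f (h u) + dist u (h u) ≤ f x + dist u x)
    (hidem : ∀ u, h (h u) = h u)
    (δ : ℝ) (hδ : 0 < δ)
    (I : Finset V) (hIM : ∀ v ∈ I, h v = v)
    (hsep : ∀ u ∈ I, ∀ v ∈ I, u ≠ v → 2 * δ < dist u v)
    (hmaximal : ∀ w : V, h w = w → ∃ x ∈ I, dist w x ≤ 2 * δ ∧ f x ≤ f w)
    (g : V → V) (hgI : ∀ u, g u ∈ I)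
    (hnear : ∀ u v : V, v ∈ I → dist u v ≤ δ → g u = v)
    (hfar : ∀ u : V, (∀ v ∈ I, δ < dist u v) →
      ∀ x ∈ I, f (g u) + dist u (g u) ≤ f x + dist u x)
    (γ : ℝ) (hγ : 1 ≤ γ)
    (hball : ∀ v ∈ I,
      γ ^ 2 * Real.log n ^ 2 ≤ ((univ.filter (fun u => dist u v ≤ δ)).card : ℝ))
    (ε α : ℝ) (hε : 0 < ε) (hα : 0 < α) (hα1 : α ≤ 1)
    {Ω : Type*} [MeasurableSpace Ω] (P : Measure Ω) [IsProbabilityMeasure P]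
    (Y : V → Ω → ℝ) (hmeas : ∀ u, Measurable (Y u))
    (hindep : iIndepFun Y P)
    (hdist : ∀ u, Measure.map (Y u) P = lapMeasure (1 / ε)) :
    (∫ ω, (∑ v ∈ I,
        ((∑ u ∈ univ.filter (fun u => g u = v), ((b u : ℝ) + Y u ω)) +
          (2 / ε) * Real.sqrt ((univ.filter (fun u => g u = v)).card) *
            Real.log (2 * n / α)) * f v
      + ∑ u, (b u : ℝ) * dist u (g u)) ∂P)
      ≤ (1 + (2 / ε) * Real.log (2 * n / α) * (1 / (γ * Real.log n))) *
          (∑ u, (b u : ℝ) * (f (h u) + dist u (h u)))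
        + δ * n * (4 * ((1 / (n : ℝ)) * ∑ v, (b v : ℝ))
            + (2 / ε) * Real.log (2 * n / α) * (1 / (γ * Real.log n))) := by
  classical
  have hn1 : (1:ℝ) < (n:ℝ) := by exact_mod_cast Nat.lt_of_lt_of_le one_lt_two hn2
  have hn0 : (n:ℝ) ≠ 0 := by positivity
  have hln : (0:ℝ) < Real.log n := Real.log_pos hn1
  have hγ0 : (0:ℝ) < γ := lt_of_lt_of_le one_pos hγ
  have hγln : (0:ℝ) < γ * Real.log n := mul_pos hγ0 hln
  set c : ℝ := (2 / ε) * Real.log (2 * n / α) with hcdef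
  set κ : ℝ := c * (1 / (γ * Real.log n)) with hκdef
  have hc0 : 0 ≤ c := by
    apply mul_nonneg (by positivity)
    apply Real.log_nonneg
    rw [le_div_iff₀ hα]
    nlinarith
  have hκ0 : 0 ≤ κ := mul_nonneg hc0 (by positivity)
  -- abbreviations
  set L : V → Finset V := fun v => univ.filter (fun u => g u = v) with hL
  -- probability facts
  have hYint : ∀ u, Integrable (Y u) P := by
    intro u
    have h1 : Integrable (fun x : ℝ => x) (Measure.map (Y u) P) := by
      rw [hdist u]; exact lapMeasure_integrable_id (by positivity)
    exact h1.comp_measurable (hmeas u)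
  have hYzero : ∀ u, (∫ ω, Y u ω ∂P) = 0 := by
    intro u
    have h1 := integral_map (μ := P) (hmeas u).aemeasurable
      (aestronglyMeasurable_id (α := ℝ))
    rw [hdist u] at h1
    rw [show (fun ω => Y u ω) = fun ω => id (Y u ω) from rfl]
    rw [← h1]
    exact lapMeasure_integral_id (by positivity)
  -- the constant (deterministic) value
  set K : ℝ := (∑ v ∈ I,
      ((∑ u ∈ L v, (b u : ℝ)) +
        (2 / ε) * Real.sqrt ((L v).card) * Real.log (2 * n / α)) * f v)
    + ∑ u, (b u : ℝ) * dist u (g u) with hK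
  -- pointwise rewriting of the integrand
  have hrw : ∀ ω, (∑ v ∈ I,
        ((∑ u ∈ univ.filter (fun u => g u = v), ((b u : ℝ) + Y u ω)) +
          (2 / ε) * Real.sqrt ((univ.filter (fun u => g u = v)).card) *
            Real.log (2 * n / α)) * f v
      + ∑ u, (b u : ℝ) * dist u (g u))
      = K + ∑ u, f (g u) * Y u ω := by
    intro ω
    have step1 : ∀ v ∈ I,
        ((∑ u ∈ L v, ((b u : ℝ) + Y u ω)) +
          (2 / ε) * Real.sqrt ((L v).card) * Real.log (2 * n / α)) * f v
        = ((∑ u ∈ L v, (b u : ℝ)) +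
            (2 / ε) * Real.sqrt ((L v).card) * Real.log (2 * n / α)) * f v
          + ∑ u ∈ L v, f (g u) * Y u ω := by
      intro v hv
      have e1 : ∑ u ∈ L v, f (g u) * Y u ω = (∑ u ∈ L v, Y u ω) * f v := by
        rw [Finset.sum_mul]
        refine Finset.sum_congr rfl fun u hu => ?_
        have hgu : g u = v := (Finset.mem_filter.mp hu).2
        rw [hgu]; ring
      rw [e1, Finset.sum_add_distrib]
      ring
    rw [Finset.sum_congr rfl step1, Finset.sum_add_distrib,
      Finset.sum_fiberwise_of_maps_to (fun u _ => hgI u) (fun u => f (g u) * Y u ω), hK]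
    ring
  have hint : (∫ ω, (∑ v ∈ I,
        ((∑ u ∈ univ.filter (fun u => g u = v), ((b u : ℝ) + Y u ω)) +
          (2 / ε) * Real.sqrt ((univ.filter (fun u => g u = v)).card) *
            Real.log (2 * n / α)) * f v
      + ∑ u, (b u : ℝ) * dist u (g u)) ∂P) = K := by
    rw [integral_congr_ae (Filter.Eventually.of_forall hrw)]
    rw [integral_add (integrable_const K)
      (integrable_finset_sum _ (fun u _ => (hYint u).const_mul (f (g u))))]
    rw [integral_const, integral_finset_sum _ (fun u _ => (hYint u).const_mul (f (g u)))]
    have : ∀ u ∈ (univ : Finset V), (∫ ω, f (g u) * Y u ω ∂P) = 0 := by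
      intro u _
      rw [integral_const_mul, hYzero u, mul_zero]
    rw [Finset.sum_congr rfl this]
    simp
  rw [hint]
  -- deterministic claims
  have claims : ∀ u, (f (g u) + dist u (g u) ≤ f (h u) + dist u (h u) + 2*δ)
      ∧ (f (g u) ≤ f (h u) + dist u (h u) + δ) := by
    intro u
    by_cases hcase : ∃ v ∈ I, dist u v ≤ δ
    · obtain ⟨v, hvI, hvd⟩ := hcase
      have hguv : g u = v := hnear u v hvI hvd
      have hvh : f v ≤ f (h u) + dist v (h u) := by
        have h0 := hopt v (h u)
        rw [hIM v hvI] at h0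
        simpa using h0
      have tri : dist v (h u) ≤ dist v u + dist u (h u) := dist_triangle _ _ _
      have hcomm : dist v u = dist u v := dist_comm _ _
      constructor
      · rw [hguv]; linarith
      · rw [hguv]; linarith
    · push_neg at hcase
      obtain ⟨x, hxI, hxd, hxf⟩ := hmaximal (h u) (hidem u)
      have h1 := hfar u hcase x hxI
      have tri : dist u x ≤ dist u (h u) + dist (h u) x := dist_triangle _ _ _
      have h2 : δ < dist u (g u) := hcase (g u) (hgI u)
      constructor
      · linarith
      · linarith
  set OPT : ℝ := ∑ u, (b u : ℝ) * (f (h u) + dist u (h u)) with hOPT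
  have hb1 : ∀ u, (1:ℝ) ≤ (b u : ℝ) := fun u => by exact_mod_cast hb u
  have hterm : ∀ u : V, 0 ≤ f (h u) + dist u (h u) :=
    fun u => add_nonneg (hf _) dist_nonneg
  -- T1 bound
  have hT1 : ∑ u, (b u : ℝ) * (f (g u) + dist u (g u))
      ≤ OPT + 2 * δ * ∑ u, (b u : ℝ) := by
    have : ∀ u ∈ (univ : Finset V), (b u : ℝ) * (f (g u) + dist u (g u))
        ≤ (b u : ℝ) * (f (h u) + dist u (h u)) + 2 * δ * (b u : ℝ) := by
      intro u _
      have h1 := (claims u).1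
      have h2 : (0:ℝ) ≤ (b u : ℝ) := by positivity
      nlinarith
    calc ∑ u, (b u : ℝ) * (f (g u) + dist u (g u))
        ≤ ∑ u, ((b u : ℝ) * (f (h u) + dist u (h u)) + 2 * δ * (b u : ℝ)) :=
          Finset.sum_le_sum this
      _ = OPT + 2 * δ * ∑ u, (b u : ℝ) := by
          rw [Finset.sum_add_distrib, ← Finset.mul_sum, hOPT]
  -- T2 bound
  have hT2 : ∑ u, f (g u) ≤ OPT + δ * n := by
    calc ∑ u, f (g u) ≤ ∑ u, ((f (h u) + dist u (h u)) + δ) :=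
          Finset.sum_le_sum (fun u _ => (claims u).2)
      _ = (∑ u, (f (h u) + dist u (h u))) + δ * n := by
          rw [Finset.sum_add_distrib, Finset.sum_const, Finset.card_univ, hn,
            nsmul_eq_mul, mul_comm]
      _ ≤ OPT + δ * n := by
          have : ∑ u, (f (h u) + dist u (h u)) ≤ OPT := by
            apply Finset.sum_le_sum
            intro u _
            have := hterm u
            nlinarith [hb1 u]
          linarith
  -- noise sum bound
  have hnoise : ∑ v ∈ I, ((2 / ε) * Real.sqrt ((L v).card) * Real.log (2 * n / α)) * f v
      ≤ κ * ∑ u, f (g u) := by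
    have hfib : ∑ v ∈ I, ((L v).card : ℝ) * f v = ∑ u, f (g u) := by
      rw [← Finset.sum_fiberwise_of_maps_to (fun u (_ : u ∈ univ) => hgI u)
        (fun u => f (g u))]
      refine Finset.sum_congr rfl fun v hv => ?_
      have : ∀ u ∈ L v, f (g u) = f v := by
        intro u hu
        rw [(Finset.mem_filter.mp hu).2]
      rw [Finset.sum_congr rfl this, Finset.sum_const, nsmul_eq_mul]
    rw [← hfib, Finset.mul_sum]
    apply Finset.sum_le_sum
    intro v hv
    have hsub : (univ.filter (fun u => dist u v ≤ δ)) ⊆ L v := by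
      intro u hu
      rw [Finset.mem_filter] at hu ⊢
      exact ⟨hu.1, hnear u v (by exact Finset.mem_of_subset (by intro x hx; exact hx) hv) hu.2⟩
    have hLv : γ^2 * (Real.log n)^2 ≤ ((L v).card : ℝ) := by
      refine le_trans (hball v hv) ?_
      exact_mod_cast Finset.card_le_card hsub
    have hsq : γ * Real.log n ≤ Real.sqrt ((L v).card) := by
      rw [show γ * Real.log n = Real.sqrt ((γ * Real.log n)^2) from
        (Real.sqrt_sq hγln.le).symm]
      apply Real.sqrt_le_sqrt
      nlinarith
    have h0 : Real.sqrt ((L v).card) * (γ * Real.log n) ≤ ((L v).card : ℝ) := by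
      have h1 := mul_le_mul_of_nonneg_left hsq (Real.sqrt_nonneg (((L v).card : ℝ)))
      rwa [Real.mul_self_sqrt (by positivity)] at h1
    have key : c * Real.sqrt ((L v).card) ≤ κ * ((L v).card : ℝ) := by
      have h1 : c * Real.sqrt ((L v).card) ≤ c * ((L v).card : ℝ) / (γ * Real.log n) := by
        rw [le_div_iff₀ hγln]
        calc c * Real.sqrt ((L v).card) * (γ * Real.log n)
            = c * (Real.sqrt ((L v).card) * (γ * Real.log n)) := by ring
          _ ≤ c * ((L v).card : ℝ) := mul_le_mul_of_nonneg_left h0 hc0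
      have h2 : c * ((L v).card : ℝ) / (γ * Real.log n) = κ * ((L v).card : ℝ) := by
        rw [hκdef]; ring
      linarith
    calc ((2 / ε) * Real.sqrt ((L v).card) * Real.log (2 * n / α)) * f v
        = (c * Real.sqrt ((L v).card)) * f v := by rw [hcdef]; ring
      _ ≤ (κ * ((L v).card : ℝ)) * f v := mul_le_mul_of_nonneg_right key (hf v)
      _ = κ * (((L v).card : ℝ) * f v) := by ring
  -- split K
  have hKsplit : K = (∑ u, (b u : ℝ) * (f (g u) + dist u (g u)))
      + ∑ v ∈ I, ((2 / ε) * Real.sqrt ((L v).card) * Real.log (2 * n / α)) * f v := by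
    rw [hK]
    have e1 : ∀ v ∈ I,
        ((∑ u ∈ L v, (b u : ℝ)) +
          (2 / ε) * Real.sqrt ((L v).card) * Real.log (2 * n / α)) * f v
        = (∑ u ∈ L v, (b u : ℝ) * f (g u))
          + ((2 / ε) * Real.sqrt ((L v).card) * Real.log (2 * n / α)) * f v := by
      intro v hv
      have : ∑ u ∈ L v, (b u : ℝ) * f (g u) = (∑ u ∈ L v, (b u : ℝ)) * f v := by
        rw [Finset.sum_mul]
        refine Finset.sum_congr rfl fun u hu => ?_
        rw [(Finset.mem_filter.mp hu).2]
      rw [this]; ring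
    rw [Finset.sum_congr rfl e1, Finset.sum_add_distrib,
      Finset.sum_fiberwise_of_maps_to (fun u _ => hgI u) (fun u => (b u : ℝ) * f (g u))]
    have : (∑ u, (b u : ℝ) * f (g u)) + ∑ u, (b u : ℝ) * dist u (g u)
        = ∑ u, (b u : ℝ) * (f (g u) + dist u (g u)) := by
      rw [← Finset.sum_add_distrib]
      exact Finset.sum_congr rfl fun u _ => by ring
    linarith [this]
  -- combine
  have hsum : (n : ℝ) * ((1 / (n : ℝ)) * ∑ v, (b v : ℝ)) = ∑ v, (b v : ℝ) := by
    field_simp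
  have hBnn : (0:ℝ) ≤ ∑ v, (b v : ℝ) := Finset.sum_nonneg fun v _ => by positivity
  have hfinal : K ≤ (OPT + 2 * δ * ∑ u, (b u : ℝ)) + κ * (OPT + δ * n) := by
    rw [hKsplit]
    have h1 := hnoise.trans (mul_le_mul_of_nonneg_left hT2 hκ0)
    linarith
  have hrhs : (1 + κ) * OPT + δ * n * (4 * ((1 / (n : ℝ)) * ∑ v, (b v : ℝ)) + κ)
      = (OPT + 4 * δ * ∑ u, (b u : ℝ)) + κ * (OPT + δ * n) := by
    have : δ * (n : ℝ) * (4 * ((1 / (n : ℝ)) * ∑ v, (b v : ℝ)))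
        = 4 * δ * ∑ v, (b v : ℝ) := by
      calc δ * (n : ℝ) * (4 * ((1 / (n : ℝ)) * ∑ v, (b v : ℝ)))
          = 4 * δ * ((n : ℝ) * ((1 / (n : ℝ)) * ∑ v, (b v : ℝ))) := by ring
        _ = 4 * δ * ∑ v, (b v : ℝ) := by rw [hsum]
    linear_combination this
  calc K ≤ (OPT + 2 * δ * ∑ u, (b u : ℝ)) + κ * (OPT + δ * n) := hfinal
    _ ≤ (OPT + 4 * δ * ∑ u, (b u : ℝ)) + κ * (OPT + δ * n) := by
        have h9 : (0:ℝ) ≤ δ * ∑ u, (b u : ℝ) := mul_nonneg hδ.le hBnn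
        linarith
    _ = (1 + κ) * OPT + δ * n * (4 * ((1 / (n : ℝ)) * ∑ v, (b v : ℝ)) + κ) := hrhs.symm
end

section
/- Suppose n ≥ 2 and that for every v ∈ I the number of connected clients dominates the square root of the number of connected locations: √(|L̂_v|) ≤ (1/ln n)·Σ_{u∈L̂_v} b_u. Then Σ_{v∈I} √(|L̂_v|)·f_v ≤ (1/ln n)·( OPT + δ·Σ_{u∈V} b_u ). -/
open Finset

/-- If for every facility `v ∈ I` the number of connected clients dominates the square
root of the number of connected locations, `√|L̂_v| ≤ (1/ln n)·Σ_{u ∈ L̂_v} b_u`, then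
`Σ_{v ∈ I} √|L̂_v|·f_v ≤ (1/ln n)·(OPT + δ·Σ_u b_u)`. Here `g` plays the role of the
reconnection function `ĥ` and `L̂_v = {u : g u = v}`. -/
theorem reconnection_sqrt_sum_bound_of_client_domination
    {V : Type*} [Fintype V] [DecidableEq V] [MetricSpace V]
    (n : ℕ) (hn : Fintype.card V = n) (hn2 : 2 ≤ n)
    (f : V → ℝ) (hf : ∀ v, 0 ≤ f v)
    (b : V → ℕ)
    (h : V → V)
    (hopt : ∀ u x : V, f (h u) + dist u (h u) ≤ f x + dist u x)
    (hidem : ∀ u, h (h u) = h u)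
    (δ : ℝ) (hδ : 0 < δ)
    (I : Finset V) (hIM : ∀ v ∈ I, h v = v)
    (hsep : ∀ u ∈ I, ∀ v ∈ I, u ≠ v → 2 * δ < dist u v)
    (hmaximal : ∀ w : V, h w = w → ∃ x ∈ I, dist w x ≤ 2 * δ ∧ f x ≤ f w)
    (g : V → V) (hgI : ∀ u, g u ∈ I)
    (hnear : ∀ u v : V, v ∈ I → dist u v ≤ δ → g u = v)
    (hfar : ∀ u : V, (∀ v ∈ I, δ < dist u v) →
      ∀ x ∈ I, f (g u) + dist u (g u) ≤ f x + dist u x)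
    (hdom : ∀ v ∈ I, Real.sqrt ((univ.filter (fun u => g u = v)).card)
      ≤ (1 / Real.log n) * ∑ u ∈ univ.filter (fun u => g u = v), (b u : ℝ)) :
    ∑ v ∈ I, Real.sqrt ((univ.filter (fun u => g u = v)).card) * f v
      ≤ (1 / Real.log n) *
          ((∑ u, (b u : ℝ) * (f (h u) + dist u (h u))) + δ * ∑ u, (b u : ℝ)) := by
  have hlog : 0 < Real.log n := by
    apply Real.log_pos
    exact_mod_cast hn2
  have hc : 0 ≤ 1 / Real.log n := by positivity
  -- key pointwise bound: f (g u) ≤ f (h u) + dist u (h u) + δ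
  have key : ∀ u : V, f (g u) ≤ f (h u) + dist u (h u) + δ := by
    intro u
    by_cases hcase : ∃ v ∈ I, dist u v ≤ δ
    · obtain ⟨v, hvI, hdv⟩ := hcase
      rw [hnear u v hvI hdv]
      have h1 := hopt v (h u)
      rw [hIM v hvI, dist_self] at h1
      have h2 : dist v (h u) ≤ dist v u + dist u (h u) := dist_triangle _ _ _
      have h3 : dist v u = dist u v := dist_comm _ _
      linarith
    · push_neg at hcase
      obtain ⟨x, hxI, hdx, hfx⟩ := hmaximal (h u) (hidem u)
      have h1 := hfar u hcase x hxI
      have h2 : δ < dist u (g u) := hcase (g u) (hgI u)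
      have h3 : dist u x ≤ dist u (h u) + dist (h u) x := dist_triangle _ _ _
      linarith
  calc ∑ v ∈ I, Real.sqrt ((univ.filter (fun u => g u = v)).card) * f v
      ≤ ∑ v ∈ I, ((1 / Real.log n) * ∑ u ∈ univ.filter (fun u => g u = v), (b u : ℝ)) * f v := by
        apply Finset.sum_le_sum
        intro v hv
        exact mul_le_mul_of_nonneg_right (hdom v hv) (hf v)
    _ = (1 / Real.log n) * ∑ v ∈ I, ∑ u ∈ univ.filter (fun u => g u = v), (b u : ℝ) * f (g u) := by
        rw [Finset.mul_sum]
        apply Finset.sum_congr rfl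
        intro v hv
        rw [mul_assoc, Finset.sum_mul]
        congr 1
        apply Finset.sum_congr rfl
        intro u hu
        rw [Finset.mem_filter] at hu
        rw [hu.2]
    _ = (1 / Real.log n) * ∑ u, (b u : ℝ) * f (g u) := by
        congr 1
        exact Finset.sum_fiberwise_of_maps_to (fun u _ => hgI u) _
    _ ≤ (1 / Real.log n) * ∑ u, (b u : ℝ) * (f (h u) + dist u (h u) + δ) := by
        apply mul_le_mul_of_nonneg_left _ hc
        apply Finset.sum_le_sum
        intro u _
        exact mul_le_mul_of_nonneg_left (key u) (Nat.cast_nonneg _)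
    _ = (1 / Real.log n) *
          ((∑ u, (b u : ℝ) * (f (h u) + dist u (h u))) + δ * ∑ u, (b u : ℝ)) := by
        congr 1
        rw [Finset.mul_sum, ← Finset.sum_add_distrib]
        apply Finset.sum_congr rfl
        intro u _
        ring
end

section
/- Suppose n ≥ 2, γ ≥ 1, |L̂_v| ≥ γ²·(ln n)² for every v ∈ I, 0 < f_min ≤ f_v ≤ f_max for every v ∈ V, and the total number of clients N = Σ_{u∈V} b_u is positive. Let η = f_max/f_min and ν = N/n. Then Σ_{v∈I} √(|L̂_v|)·f_v ≤ (1/(γ·ln n))·(η/ν)·OPT. -/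
open Finset

/-- Client–location ratio analysis: if `|L̂_v| ≥ γ²·(ln n)²` for all `v ∈ I`,
`0 < f_min ≤ f_v ≤ f_max`, and the total number of clients `N = Σ_u b_u` is positive,
then with `η = f_max / f_min` and `ν = N / n` one has
`Σ_{v ∈ I} √|L̂_v|·f_v ≤ (1/(γ·ln n))·(η/ν)·OPT`. Here `g` plays the role of the
reconnection function `ĥ` and `L̂_v = {u : g u = v}` (the `L̂_v` partition `V`). -/
theorem reconnection_sqrt_sum_bound_ratio
    {V : Type*} [Fintype V] [DecidableEq V] [MetricSpace V]
    (n : ℕ) (hn : Fintype.card V = n) (hn2 : 2 ≤ n)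
    (f : V → ℝ) (fmin fmax : ℝ) (hfmin : 0 < fmin)
    (hflb : ∀ v, fmin ≤ f v) (hfub : ∀ v, f v ≤ fmax)
    (b : V → ℕ) (hN : 0 < ∑ u, b u)
    (h : V → V)
    (hopt : ∀ u x : V, f (h u) + dist u (h u) ≤ f x + dist u x)
    (hidem : ∀ u, h (h u) = h u)
    (δ : ℝ) (hδ : 0 < δ)
    (I : Finset V) (hIM : ∀ v ∈ I, h v = v)
    (hsep : ∀ u ∈ I, ∀ v ∈ I, u ≠ v → 2 * δ < dist u v)
    (hmaximal : ∀ w : V, h w = w → ∃ x ∈ I, dist w x ≤ 2 * δ ∧ f x ≤ f w)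
    (g : V → V) (hgI : ∀ u, g u ∈ I)
    (hnear : ∀ u v : V, v ∈ I → dist u v ≤ δ → g u = v)
    (hfar : ∀ u : V, (∀ v ∈ I, δ < dist u v) →
      ∀ x ∈ I, f (g u) + dist u (g u) ≤ f x + dist u x)
    (γ : ℝ) (hγ : 1 ≤ γ)
    (hL : ∀ v ∈ I,
      γ ^ 2 * Real.log n ^ 2 ≤ ((univ.filter (fun u => g u = v)).card : ℝ)) :
    ∑ v ∈ I, Real.sqrt ((univ.filter (fun u => g u = v)).card) * f v
      ≤ (1 / (γ * Real.log n)) * ((fmax / fmin) / ((∑ u, (b u : ℝ)) / n)) *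
          ∑ u, (b u : ℝ) * (f (h u) + dist u (h u)) := by
  have hV : Nonempty V := Fintype.card_pos_iff.mp (by omega)
  obtain ⟨v0⟩ := hV
  have hfmax : 0 < fmax := lt_of_lt_of_le hfmin ((hflb v0).trans (hfub v0))
  have hlog : 0 < Real.log n := Real.log_pos (by norm_cast)
  have hγ0 : 0 < γ := lt_of_lt_of_le one_pos hγ
  set c := γ * Real.log n with hcdef
  have hc : 0 < c := mul_pos hγ0 hlog
  have hNr : (0:ℝ) < ∑ u, (b u : ℝ) := by exact_mod_cast hN
  have hn0 : (0:ℝ) < n := by exact_mod_cast (by omega : 0 < n)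
  have step1 : ∀ v ∈ I, Real.sqrt ((univ.filter (fun u => g u = v)).card) * f v
      ≤ ((univ.filter (fun u => g u = v)).card : ℝ) / c * fmax := by
    intro v hv
    set m : ℝ := ((univ.filter (fun u => g u = v)).card : ℝ) with hm_def
    have hm : c ^ 2 ≤ m := by
      have := hL v hv
      calc c ^ 2 = γ ^ 2 * Real.log n ^ 2 := by ring
        _ ≤ m := this
    have hm0 : (0:ℝ) ≤ m := (sq_nonneg c).trans hm
    have hsm : c ≤ Real.sqrt m := by
      have := Real.sqrt_le_sqrt hm
      rwa [Real.sqrt_sq hc.le] at this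
    have hsqle : Real.sqrt m ≤ m / c := by
      rw [le_div_iff₀ hc]
      calc Real.sqrt m * c ≤ Real.sqrt m * Real.sqrt m :=
            mul_le_mul_of_nonneg_left hsm (Real.sqrt_nonneg m)
        _ = m := Real.mul_self_sqrt hm0
    exact mul_le_mul hsqle (hfub v) (hfmin.le.trans (hflb v))
      ((Real.sqrt_nonneg m).trans hsqle)
  have hsum : ∑ v ∈ I, (((univ.filter (fun u => g u = v)).card : ℝ)) = n := by
    have hcard : (univ : Finset V).card = ∑ v ∈ I, (univ.filter (fun u => g u = v)).card :=
      Finset.card_eq_sum_card_fiberwise (fun u _ => hgI u)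
    rw [← Nat.cast_sum, ← hcard, Finset.card_univ, hn]
  have hOPT : (∑ u, (b u : ℝ)) * fmin ≤ ∑ u, (b u : ℝ) * (f (h u) + dist u (h u)) := by
    rw [Finset.sum_mul]
    refine Finset.sum_le_sum fun u _ => ?_
    refine mul_le_mul_of_nonneg_left ?_ (Nat.cast_nonneg _)
    have h1 := hflb (h u)
    have h2 : (0:ℝ) ≤ dist u (h u) := dist_nonneg
    linarith
  have hcoef : (0:ℝ) ≤ 1 / c * ((fmax / fmin) / ((∑ u, (b u : ℝ)) / n)) :=
    mul_nonneg (one_div_nonneg.mpr hc.le)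
      (div_nonneg (div_nonneg hfmax.le hfmin.le) (div_nonneg hNr.le hn0.le))
  calc ∑ v ∈ I, Real.sqrt ((univ.filter (fun u => g u = v)).card) * f v
      ≤ ∑ v ∈ I, ((univ.filter (fun u => g u = v)).card : ℝ) / c * fmax :=
        Finset.sum_le_sum step1
    _ = (n : ℝ) / c * fmax := by rw [← Finset.sum_mul, ← Finset.sum_div, hsum]
    _ = 1 / c * ((fmax / fmin) / ((∑ u, (b u : ℝ)) / n)) * ((∑ u, (b u : ℝ)) * fmin) := by
        field_simp
    _ ≤ 1 / c * ((fmax / fmin) / ((∑ u, (b u : ℝ)) / n)) *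
          ∑ u, (b u : ℝ) * (f (h u) + dist u (h u)) :=
        mul_le_mul_of_nonneg_left hOPT hcoef
end

section
/- Let p ∈ (0,1] and γ ≥ 1 satisfy p > 1/γ. Then there exists N ∈ ℕ such that for all natural numbers n ≥ N and all natural numbers k with k ≥ γ²·(ln n)², if X_1, ..., X_k are independent Bernoulli(p) random variables (taking values in {0,1} with Pr[X_i = 1] = p), then Pr[ √k ≤ (1/ln n)·Σ_{i=1}^k X_i ] ≥ 1 - 1/n². -/
open MeasureTheory ProbabilityTheory

/-- `Bernoulli(p)` as a probability measure on `ℝ`, supported on `{0, 1}`,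
assigning probability `p` to `1` and `1 - p` to `0`. -/
noncomputable def bernoulliReal (p : ℝ) : Measure ℝ :=
  ENNReal.ofReal p • Measure.dirac (1 : ℝ) + ENNReal.ofReal (1 - p) • Measure.dirac (0 : ℝ)

lemma integrable_dirac' {f : ℝ → ℝ} (a : ℝ) : Integrable f (Measure.dirac a) := by
  refine (integrable_const (f a)).congr ?_
  rw [MeasureTheory.ae_dirac_eq]
  exact Filter.eventually_pure.2 rfl

lemma integrable_bernoulliReal (p : ℝ) (f : ℝ → ℝ) : Integrable f (bernoulliReal p) := by
  unfold bernoulliReal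
  exact ((integrable_dirac' 1).smul_measure ENNReal.ofReal_ne_top).add_measure
    ((integrable_dirac' 0).smul_measure ENNReal.ofReal_ne_top)

lemma integral_bernoulliReal (p : ℝ) (hp0 : 0 ≤ p) (hp1 : p ≤ 1) (f : ℝ → ℝ) :
    ∫ x, f x ∂(bernoulliReal p) = p * f 1 + (1 - p) * f 0 := by
  unfold bernoulliReal
  rw [integral_add_measure ((integrable_dirac' 1).smul_measure ENNReal.ofReal_ne_top)
      ((integrable_dirac' 0).smul_measure ENNReal.ofReal_ne_top),
    integral_smul_measure, integral_smul_measure, integral_dirac, integral_dirac,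
    ENNReal.toReal_ofReal hp0, ENNReal.toReal_ofReal (by linarith)]
  simp [smul_eq_mul]

lemma mgf_bernoulli {Ω : Type} [MeasurableSpace Ω] (P : Measure Ω) (X : Ω → ℝ)
    (hX : Measurable X) {p : ℝ} (hp0 : 0 ≤ p) (hp1 : p ≤ 1)
    (hmap : Measure.map X P = bernoulliReal p) (t : ℝ) :
    mgf X P t = p * Real.exp t + (1 - p) := by
  have hg : AEStronglyMeasurable (fun x : ℝ => Real.exp (t * x)) (Measure.map X P) :=
    Measurable.aestronglyMeasurable (by exact (measurable_id.const_mul t).exp)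
  have h : mgf X P t = ∫ x, Real.exp (t * x) ∂(Measure.map X P) := by
    rw [integral_map hX.aemeasurable hg]
    rfl
  rw [h, hmap, integral_bernoulliReal p hp0 hp1]
  simp

lemma integrable_exp_mul_of_bernoulli {Ω : Type} [MeasurableSpace Ω] (P : Measure Ω)
    (X : Ω → ℝ) (hX : Measurable X) {p : ℝ}
    (hmap : Measure.map X P = bernoulliReal p) (t : ℝ) :
    Integrable (fun ω => Real.exp (t * X ω)) P := by
  have hg : AEStronglyMeasurable (fun x : ℝ => Real.exp (t * x)) (Measure.map X P) :=
    Measurable.aestronglyMeasurable (by exact (measurable_id.const_mul t).exp)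
  exact (integrable_map_measure hg hX.aemeasurable).mp
    (by rw [hmap]; exact integrable_bernoulliReal p _)

set_option maxHeartbeats 1000000 in
/-- Let `p ∈ (0,1]` and `γ ≥ 1` with `p > 1/γ`. Then for all sufficiently large `n`
and all `k ≥ γ²·(ln n)²`, independent `Bernoulli(p)` variables `X_1, …, X_k` satisfy
`Pr[√k ≤ (1/ln n)·Σ X_i] ≥ 1 - 1/n²`. -/
theorem bernoulli_sum_dominates_sqrt (p γ : ℝ) (hp0 : 0 < p) (hp1 : p ≤ 1)
    (hγ : 1 ≤ γ) (hpγ : 1 / γ < p) :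
    ∃ N : ℕ, ∀ n : ℕ, N ≤ n → ∀ k : ℕ, γ ^ 2 * Real.log n ^ 2 ≤ (k : ℝ) →
      ∀ (Ω : Type) [MeasurableSpace Ω] (P : Measure Ω) [IsProbabilityMeasure P]
        (X : Fin k → Ω → ℝ), (∀ i, Measurable (X i)) →
        iIndepFun X P →
        (∀ i, Measure.map (X i) P = bernoulliReal p) →
        ENNReal.ofReal (1 - 1 / (n : ℝ) ^ 2) ≤
          P {ω | Real.sqrt k ≤ (1 / Real.log n) * ∑ i, X i ω} := by
  have hγ0 : (0:ℝ) < γ := lt_of_lt_of_le one_pos hγ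
  set c := p - 1/γ with hc_def
  have hc : 0 < c := sub_pos.mpr hpγ
  have hγinv : 0 < 1/γ := by positivity
  have hc1 : c < 1 := by simp only [hc_def]; linarith
  set s := c/2 with hs_def
  have hs0 : 0 < s := by positivity
  have hs1 : s ≤ 1 := by simp only [hs_def]; linarith
  clear_value c s
  refine ⟨⌈Real.exp (max 1 (8/(c^2*γ^2)))⌉₊ + 1, ?_⟩
  intro n hn k hk Ω _ P _ X hXmeas hindep hmap
  have hnpos : 0 < n := lt_of_lt_of_le (Nat.succ_pos _) hn
  have hnreal : Real.exp (max 1 (8/(c^2*γ^2))) ≤ (n:ℝ) := by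
    calc Real.exp (max 1 (8/(c^2*γ^2))) ≤ (⌈Real.exp (max 1 (8/(c^2*γ^2)))⌉₊ : ℝ) :=
          Nat.le_ceil _
      _ ≤ (n:ℝ) := by exact_mod_cast le_trans (Nat.le_succ _) hn
  have hlog : max 1 (8/(c^2*γ^2)) ≤ Real.log n :=
    (Real.le_log_iff_exp_le (by exact_mod_cast hnpos)).mpr hnreal
  have hln1 : 1 ≤ Real.log n := le_trans (le_max_left _ _) hlog
  have hlnpos : 0 < Real.log n := lt_of_lt_of_le one_pos hln1
  have hln8 : 8 ≤ c^2*γ^2 * Real.log n := by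
    have h2 := le_trans (le_max_right _ _) hlog
    rw [div_le_iff₀ (by positivity)] at h2
    nlinarith
  have hk0 : (0:ℝ) ≤ (k:ℝ) := Nat.cast_nonneg k
  have hsqrt : γ * Real.log n ≤ Real.sqrt k := by
    have h := Real.sqrt_le_sqrt hk
    rwa [show γ^2*Real.log n^2 = (γ*Real.log n)^2 by ring,
      Real.sqrt_sq (by positivity)] at h
  have hsqk : Real.sqrt k * Real.log n ≤ (k:ℝ)/γ := by
    have h1 : Real.sqrt k * (γ * Real.log n) ≤ Real.sqrt k * Real.sqrt k :=
      mul_le_mul_of_nonneg_left hsqrt (Real.sqrt_nonneg _)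
    rw [Real.mul_self_sqrt hk0] at h1
    rw [le_div_iff₀ hγ0]
    nlinarith [Real.sqrt_nonneg (k:ℝ)]
  -- Chernoff bound
  have hint : ∀ i : Fin k, Integrable (fun ω => Real.exp (-s * X i ω)) P := fun i =>
    integrable_exp_mul_of_bernoulli P (X i) (hXmeas i) (hmap i) (-s)
  have hintS : Integrable (fun ω => Real.exp (-s * (∑ i, X i) ω)) P :=
    hindep.integrable_exp_mul_sum hXmeas (fun i _ => hint i)
  have hmgf : mgf (∑ i, X i) P (-s) = (p * Real.exp (-s) + (1-p))^k := by
    rw [hindep.mgf_sum hXmeas]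
    rw [Finset.prod_congr rfl
      (fun i _ => mgf_bernoulli P (X i) (hXmeas i) hp0.le hp1 (hmap i) (-s))]
    simp [Finset.prod_const]
  have hcher := measure_le_le_exp_mul_mgf (μ := P) (X := ∑ i, X i) ((k:ℝ)/γ)
    (neg_nonpos.mpr hs0.le) hintS
  rw [hmgf] at hcher
  have hbase0 : 0 ≤ p * Real.exp (-s) + (1-p) := by
    have := Real.exp_pos (-s); nlinarith
  have hbase : p * Real.exp (-s) + (1-p) ≤ Real.exp (-(p*s) + s^2) := by
    have habs := abs_le.mp (Real.abs_exp_sub_one_sub_id_le (x := -s)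
      (by rw [abs_neg, abs_of_nonneg hs0.le]; linarith))
    have he : Real.exp (-s) ≤ 1 - s + s^2 := by nlinarith [habs.2]
    have hpe : p * Real.exp (-s) ≤ p * (1 - s + s^2) := mul_le_mul_of_nonneg_left he hp0.le
    have h2 : p * Real.exp (-s) + (1-p) ≤ 1 + (-(p*s) + s^2) := by
      nlinarith [hpe, mul_nonneg (sub_nonneg.mpr hp1) (sq_nonneg s)]
    exact h2.trans (by linarith [Real.add_one_le_exp (-(p*s)+s^2)])
  have hpow : (p * Real.exp (-s) + (1-p))^k ≤ Real.exp ((k:ℝ) * (-(p*s) + s^2)) := by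
    calc (p * Real.exp (-s) + (1-p))^k ≤ Real.exp (-(p*s)+s^2) ^ k :=
          pow_le_pow_left₀ hbase0 hbase k
      _ = Real.exp ((k:ℝ) * (-(p*s)+s^2)) := (Real.exp_nat_mul _ k).symm
  have hexp : Real.exp (-(-s) * ((k:ℝ)/γ)) * Real.exp ((k:ℝ)*(-(p*s)+s^2))
      = Real.exp ((k:ℝ) * (-(c^2/4))) := by
    rw [← Real.exp_add]
    congr 1
    have hγne : γ ≠ 0 := ne_of_gt hγ0
    rw [hs_def, hc_def]
    field_simp [hs_def, hc_def]
    ring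
  have htail : (P {ω | (∑ i, X i) ω ≤ (k:ℝ)/γ}).toReal ≤ 1/(n:ℝ)^2 := by
    have hstep : (P {ω | (∑ i, X i) ω ≤ (k:ℝ)/γ}).toReal ≤ Real.exp ((k:ℝ) * (-(c^2/4))) := by
      calc (P {ω | (∑ i, X i) ω ≤ (k:ℝ)/γ}).toReal
          ≤ Real.exp (-(-s) * ((k:ℝ)/γ)) * (p * Real.exp (-s) + (1-p))^k := hcher
        _ ≤ Real.exp (-(-s) * ((k:ℝ)/γ)) * Real.exp ((k:ℝ)*(-(p*s)+s^2)) := by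
            exact mul_le_mul_of_nonneg_left hpow (Real.exp_pos _).le
        _ = Real.exp ((k:ℝ) * (-(c^2/4))) := hexp
    refine hstep.trans ?_
    have hexple : Real.exp ((k:ℝ) * (-(c^2/4))) ≤ Real.exp (-(2*Real.log n)) := by
      apply Real.exp_le_exp.mpr
      have h1 : c^2 * (γ^2 * Real.log n ^2) ≤ c^2 * (k:ℝ) :=
        mul_le_mul_of_nonneg_left hk (sq_nonneg c)
      have h2 : 8 * Real.log n ≤ (c^2*γ^2 * Real.log n) * Real.log n :=
        mul_le_mul_of_nonneg_right hln8 (by linarith)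
      nlinarith
    refine hexple.trans_eq ?_
    rw [show -(2*Real.log n) = Real.log (((n:ℝ)^2)⁻¹) by
        rw [Real.log_inv, Real.log_pow]; push_cast; ring,
      Real.exp_log (by positivity)]
    rw [one_div]
  -- conclude
  have hSmeas : Measurable (fun ω => ∑ i, X i ω) := by
    apply Finset.measurable_sum
    exact fun i _ => hXmeas i
  have hEmeas : MeasurableSet {ω | Real.sqrt k ≤ (1 / Real.log n) * ∑ i, X i ω} :=
    measurableSet_le measurable_const (hSmeas.const_mul _)
  have hsub : {ω | Real.sqrt k ≤ (1 / Real.log n) * ∑ i, X i ω}ᶜ ⊆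
      {ω | (∑ i, X i) ω ≤ (k:ℝ)/γ} := by
    intro ω hω
    simp only [Set.mem_compl_iff, Set.mem_setOf_eq, not_le] at hω
    simp only [Set.mem_setOf_eq, Finset.sum_apply]
    have hlt : ∑ i, X i ω < Real.sqrt k * Real.log n := by
      rw [one_div, inv_mul_lt_iff₀ hlnpos] at hω
      linarith [hω]
    linarith
  have hcompl : P {ω | Real.sqrt k ≤ (1 / Real.log n) * ∑ i, X i ω}ᶜ ≤
      ENNReal.ofReal (1/(n:ℝ)^2) := by
    refine le_trans (measure_mono hsub) ?_
    rw [← ENNReal.ofReal_toReal (measure_ne_top P _)]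
    exact ENNReal.ofReal_le_ofReal htail
  calc ENNReal.ofReal (1 - 1/(n:ℝ)^2) = 1 - ENNReal.ofReal (1/(n:ℝ)^2) := by
        rw [ENNReal.ofReal_sub _ (by positivity), ENNReal.ofReal_one]
    _ ≤ 1 - P {ω | Real.sqrt k ≤ (1 / Real.log n) * ∑ i, X i ω}ᶜ :=
        tsub_le_tsub_left hcompl 1
    _ = P {ω | Real.sqrt k ≤ (1 / Real.log n) * ∑ i, X i ω} := by
        rw [← prob_compl_eq_one_sub hEmeas.compl, compl_compl]
end

section
/- Let p ∈ (0,1] and γ ≥ 1. Then there exists N ∈ ℕ such that for all natural numbers n ≥ N and all natural numbers k with k ≥ γ²·(ln n)³, if X_1, ..., X_k are independent Bernoulli(p) random variables (taking values in {0,1} with Pr[X_i = 1] = p), then Pr[ √k ≤ (1/(γ·ln n))·Σ_{i=1}^k X_i ] ≥ 1 - 1/n². -/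
open MeasureTheory ProbabilityTheory

lemma integrable_dirac_real {f : ℝ → ℝ} (hf : Measurable f) (a : ℝ) :
    Integrable f (Measure.dirac a) := by
  refine ⟨hf.aestronglyMeasurable, ?_⟩
  rw [HasFiniteIntegral, lintegral_dirac' _ (by measurability)]
  exact ENNReal.coe_lt_top

lemma bernoulliReal_integrable {p : ℝ} {f : ℝ → ℝ} (hf : Measurable f) :
    Integrable f (bernoulliReal p) := by
  unfold bernoulliReal
  exact Integrable.add_measure
    ((integrable_dirac_real hf 1).smul_measure ENNReal.ofReal_ne_top)
    ((integrable_dirac_real hf 0).smul_measure ENNReal.ofReal_ne_top)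

lemma bernoulliReal_integral {p : ℝ} (hp0 : 0 ≤ p) (hp1 : p ≤ 1) {f : ℝ → ℝ}
    (hf : Measurable f) :
    ∫ x, f x ∂(bernoulliReal p) = p * f 1 + (1 - p) * f 0 := by
  unfold bernoulliReal
  rw [integral_add_measure
      ((integrable_dirac_real hf 1).smul_measure ENNReal.ofReal_ne_top)
      ((integrable_dirac_real hf 0).smul_measure ENNReal.ofReal_ne_top),
    integral_smul_measure, integral_smul_measure,
    integral_dirac' f 1 hf.stronglyMeasurable, integral_dirac' f 0 hf.stronglyMeasurable,
    ENNReal.toReal_ofReal hp0, ENNReal.toReal_ofReal (by linarith)]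
  simp [smul_eq_mul]

lemma exp_mul_measurable (t : ℝ) : Measurable fun x : ℝ => Real.exp (t * x) :=
  (measurable_id.const_mul t).exp

lemma bernoulliReal_exp_integrable {p t : ℝ} {Ω : Type} [MeasurableSpace Ω]
    {P : Measure Ω} {X : Ω → ℝ} (hX : Measurable X)
    (hmap : Measure.map X P = bernoulliReal p) :
    Integrable (fun ω => Real.exp (t * X ω)) P :=
  (integrable_map_measure (exp_mul_measurable t).aestronglyMeasurable hX.aemeasurable).mp
    (by rw [hmap]; exact bernoulliReal_integrable (exp_mul_measurable t))

lemma bernoulliReal_mgf {p : ℝ} (hp0 : 0 ≤ p) (hp1 : p ≤ 1) {Ω : Type} [MeasurableSpace Ω]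
    {P : Measure Ω} {X : Ω → ℝ} (hX : Measurable X)
    (hmap : Measure.map X P = bernoulliReal p) (t : ℝ) :
    mgf X P t = p * Real.exp t + (1 - p) := by
  rw [mgf, ← integral_map hX.aemeasurable (exp_mul_measurable t).aestronglyMeasurable, hmap,
    bernoulliReal_integral hp0 hp1 (exp_mul_measurable t)]
  simp

lemma bernoulli_base_bound {p : ℝ} (hp0 : 0 < p) (hp1 : p ≤ 1) :
    p * Real.exp (-(1/2)) + (1 - p) ≤ Real.exp (-(p/3)) := by
  have h32 : (3:ℝ)/2 ≤ Real.exp (1/2) := by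
    have := Real.add_one_le_exp (1/2 : ℝ); linarith
  have he : Real.exp (-(1/2)) ≤ 2/3 := by
    rw [Real.exp_neg]
    have := inv_anti₀ (by norm_num : (0:ℝ) < 3/2) h32
    linarith [this]
  have h2 : 1 - p/3 ≤ Real.exp (-(p/3)) := by
    have := Real.add_one_le_exp (-(p/3)); linarith
  nlinarith [mul_le_mul_of_nonneg_left he hp0.le]

set_option maxHeartbeats 1000000 in
/-- Let `p ∈ (0,1]` and `γ ≥ 1`. Then for all sufficiently large `n` and all
`k ≥ γ²·(ln n)³`, independent `Bernoulli(p)` variables `X_1, …, X_k` satisfy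
`Pr[√k ≤ (1/(γ·ln n))·Σ X_i] ≥ 1 - 1/n²`. -/
theorem bernoulli_sum_dominates_sqrt_strong (p γ : ℝ) (hp0 : 0 < p) (hp1 : p ≤ 1)
    (hγ : 1 ≤ γ) :
    ∃ N : ℕ, ∀ n : ℕ, N ≤ n → ∀ k : ℕ, γ ^ 2 * Real.log n ^ 3 ≤ (k : ℝ) →
      ∀ (Ω : Type) [MeasurableSpace Ω] (P : Measure Ω) [IsProbabilityMeasure P]
        (X : Fin k → Ω → ℝ), (∀ i, Measurable (X i)) →
        iIndepFun X P →
        (∀ i, Measure.map (X i) P = bernoulliReal p) →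
        ENNReal.ofReal (1 - 1 / (n : ℝ) ^ 2) ≤
          P {ω | Real.sqrt k ≤ (1 / (γ * Real.log n)) * ∑ i, X i ω} := by
  refine ⟨⌈Real.exp (144 / p ^ 2)⌉₊, fun n hn k hk Ω _ P _ X hmeas hindep hmap => ?_⟩
  set L := Real.log n with hLdef
  have hp2 : (0:ℝ) < p ^ 2 := by positivity
  have hnR : Real.exp (144 / p ^ 2) ≤ (n : ℝ) := by
    calc Real.exp (144 / p ^ 2) ≤ (⌈Real.exp (144 / p ^ 2)⌉₊ : ℝ) := Nat.le_ceil _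
    _ ≤ (n : ℝ) := by exact_mod_cast hn
  have hn0 : (0:ℝ) < n := lt_of_lt_of_le (Real.exp_pos _) hnR
  have hL : 144 / p ^ 2 ≤ L := (Real.le_log_iff_exp_le hn0).mpr hnR
  have h144 : (144:ℝ) ≤ 144 / p ^ 2 := by
    rw [le_div_iff₀ hp2]; nlinarith
  have hL1 : (1:ℝ) ≤ L := by linarith
  have hL0 : (0:ℝ) < L := by linarith
  have hγ0 : (0:ℝ) < γ := by linarith
  have hγ2 : (1:ℝ) ≤ γ ^ 2 := by nlinarith
  have hγL : (0:ℝ) < γ * L := by positivity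
  have hL3 : (1:ℝ) ≤ L ^ 3 := by
    calc (1:ℝ) = 1 ^ 3 := by norm_num
    _ ≤ L ^ 3 := pow_le_pow_left₀ (by norm_num) hL1 3
  have hk1 : (1:ℝ) ≤ (k:ℝ) := by nlinarith
  have hk0 : (0:ℝ) ≤ (k:ℝ) := by linarith
  set a := γ * L * Real.sqrt k with hadef
  have hsqk0 : 0 ≤ Real.sqrt k := Real.sqrt_nonneg _
  have ha0 : 0 ≤ a := by positivity
  -- √L ≥ 12/p
  have hsL : 12 / p ≤ Real.sqrt L := by
    have h : Real.sqrt ((12 / p) ^ 2) ≤ Real.sqrt L := by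
      apply Real.sqrt_le_sqrt; rw [div_pow]; linarith [hL]
    rwa [Real.sqrt_sq (by positivity)] at h
  have hsL0 : 0 ≤ Real.sqrt L := Real.sqrt_nonneg _
  -- √k ≥ γ L √L
  have hsk : γ * L * Real.sqrt L ≤ Real.sqrt k := by
    have h1 : Real.sqrt (γ ^ 2 * L ^ 3) ≤ Real.sqrt k := Real.sqrt_le_sqrt hk
    have h2 : γ ^ 2 * L ^ 3 = (γ * L) ^ 2 * L := by ring
    rw [h2, Real.sqrt_mul (sq_nonneg _), Real.sqrt_sq hγL.le] at h1
    exact h1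
  -- a ≤ p k / 12
  have haL : a * Real.sqrt L ≤ (k:ℝ) := by
    have h : a * Real.sqrt L = (γ * L * Real.sqrt L) * Real.sqrt k := by ring
    rw [h]
    calc (γ * L * Real.sqrt L) * Real.sqrt k ≤ Real.sqrt k * Real.sqrt k :=
          mul_le_mul_of_nonneg_right hsk hsqk0
    _ = (k:ℝ) := Real.mul_self_sqrt hk0
  have hapk : a ≤ p * k / 12 := by
    have h1 : a * (12 / p) ≤ a * Real.sqrt L := mul_le_mul_of_nonneg_left hsL ha0
    have h2 : a * (12 / p) ≤ (k:ℝ) := h1.trans haL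
    have h3 : a ≤ (k:ℝ) / (12 / p) := (le_div_iff₀ (by positivity)).mpr h2
    have h4 : (k:ℝ) / (12 / p) = p * k / 12 := by field_simp
    linarith [h3, h4.ge, h4.le]
  -- p k ≥ 144 L
  have h144L : (144:ℝ) ≤ p ^ 2 * L := by
    rw [div_le_iff₀ hp2] at hL; linarith
  have hpk : 144 * L ≤ p * k := by
    have s1 : L ^ 3 ≤ (k:ℝ) := by nlinarith [pow_nonneg hL0.le 3]
    have s2 : 144 * L ^ 2 ≤ p ^ 2 * L * L ^ 2 :=
      mul_le_mul_of_nonneg_right h144L (sq_nonneg L)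
    have s3 : p ^ 2 * L ^ 3 ≤ p ^ 2 * k := by nlinarith [sq_nonneg p]
    have s4 : p ^ 2 * k ≤ p * k := by nlinarith
    nlinarith [sq_nonneg L]
  -- Chernoff with t = -1/2
  have ht : (-(1/2) : ℝ) ≤ 0 := by norm_num
  have hintsum : Integrable (fun ω => Real.exp (-(1/2) * (∑ i, X i) ω)) P :=
    hindep.integrable_exp_mul_sum hmeas
      (fun i _ => bernoulliReal_exp_integrable (hmeas i) (hmap i))
  have hmgf : mgf (∑ i, X i) P (-(1/2)) = (p * Real.exp (-(1/2)) + (1 - p)) ^ k := by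
    rw [hindep.mgf_sum hmeas Finset.univ]
    rw [Finset.prod_congr rfl
      (fun i _ => bernoulliReal_mgf hp0.le hp1 (hmeas i) (hmap i) (-(1/2))),
      Finset.prod_const, Finset.card_univ, Fintype.card_fin]
  have hchern := measure_le_le_exp_mul_mgf (μ := P) (X := ∑ i, X i) (t := -(1/2)) a ht hintsum
  rw [hmgf] at hchern
  -- real-valued bound
  have hbase0 : 0 ≤ p * Real.exp (-(1/2)) + (1 - p) := by
    have := Real.exp_pos (-(1/2) : ℝ); nlinarith
  have hpow : (p * Real.exp (-(1/2)) + (1 - p)) ^ k ≤ Real.exp ((k : ℝ) * (-(p / 3))) := by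
    rw [Real.exp_nat_mul]
    exact pow_le_pow_left₀ hbase0 (bernoulli_base_bound hp0 hp1) k
  have hreal : Real.exp (- (-(1/2)) * a) * (p * Real.exp (-(1/2)) + (1 - p)) ^ k
      ≤ 1 / (n:ℝ) ^ 2 := by
    have h1 : Real.exp (- (-(1/2)) * a) * (p * Real.exp (-(1/2)) + (1 - p)) ^ k ≤
        Real.exp (- (-(1/2)) * a + (k:ℝ) * (-(p / 3))) := by
      rw [Real.exp_add]
      exact mul_le_mul_of_nonneg_left hpow (Real.exp_pos _).le
    have h2 : - (-(1/2)) * a + (k:ℝ) * (-(p / 3)) ≤ -(2 * L) := by nlinarith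
    have h3 : Real.exp (-(2 * L)) = 1 / (n:ℝ) ^ 2 := by
      rw [Real.exp_neg, two_mul, Real.exp_add, Real.exp_log hn0, one_div, pow_two]
    calc Real.exp (- (-(1/2)) * a) * (p * Real.exp (-(1/2)) + (1 - p)) ^ k
        ≤ Real.exp (- (-(1/2)) * a + (k:ℝ) * (-(p / 3))) := h1
      _ ≤ Real.exp (-(2 * L)) := Real.exp_le_exp.mpr h2
      _ = 1 / (n:ℝ) ^ 2 := h3
  -- assemble
  have hsum : Measurable fun ω => ∑ i, X i ω :=
    Finset.measurable_sum _ (fun i _ => hmeas i)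
  set S := {ω | Real.sqrt k ≤ 1 / (γ * L) * ∑ i, X i ω} with hSdef
  have hS : MeasurableSet S := measurableSet_le measurable_const (measurable_const.mul hsum)
  have hsub : Sᶜ ⊆ {ω | (∑ i, X i) ω ≤ a} := by
    intro ω hω
    simp only [hSdef, Set.mem_compl_iff, Set.mem_setOf_eq, not_le] at hω
    simp only [Set.mem_setOf_eq, Finset.sum_apply]
    rw [one_div_mul_eq_div, div_lt_iff₀ hγL] at hω
    calc ∑ i, X i ω ≤ Real.sqrt k * (γ * L) := hω.le
      _ = a := by rw [hadef]; ring
  have hinv2 : (0:ℝ) ≤ 1 / (n:ℝ) ^ 2 := by positivity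
  have hcompl : P Sᶜ ≤ ENNReal.ofReal (1 / (n:ℝ) ^ 2) := by
    refine le_trans (measure_mono hsub) ?_
    rw [ENNReal.le_ofReal_iff_toReal_le (measure_ne_top _ _) hinv2]
    exact hchern.trans hreal
  have hinv1 : 1 / (n:ℝ) ^ 2 ≤ 1 := by
    have hn1 : (1:ℝ) ≤ n := le_trans (Real.one_le_exp (by positivity)) hnR
    rw [div_le_one (by positivity)]; nlinarith
  have hsplit : ENNReal.ofReal (1 - 1 / (n:ℝ) ^ 2) + ENNReal.ofReal (1 / (n:ℝ) ^ 2) = 1 := by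
    rw [← ENNReal.ofReal_add (by linarith) hinv2]
    norm_num
  have htotal : P S + P Sᶜ = 1 := (measure_add_measure_compl hS).trans measure_univ
  have hfinal : ENNReal.ofReal (1 - 1 / (n:ℝ) ^ 2) + P Sᶜ ≤ P S + P Sᶜ := by
    rw [htotal, ← hsplit]
    exact add_le_add le_rfl hcompl
  exact (ENNReal.add_le_add_iff_right (measure_ne_top _ _)).mp hfinal
end
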